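/- arXiv:2303.00785 — 5 statements merged into one kernel-verified Lean document; each statement's English description precedes it below -/
import Mathlib

section
/- Fix β ∈ ℝ^m with P_D ≠ ∅, let ζ ∈ 𝒞_LP(β) and d ∈ ℝ^ℓ. (i) If ζ + t d ∉ 𝒞_LP(β) for every t > 0, then (z_LP(ζ + t d; β) − z_LP(ζ; β))/t → +∞ as t → 0⁺, i.e. ∇_d z_LP(ζ) = +∞. (ii) Otherwise there exists ε > 0 with ζ + t d ∈ 𝒞_LP(β) for all t ∈ [0, ε], the one-sided directional derivative ∇_d z_LP(ζ) exists and is finite, and ∇_d z_LP(ζ) = max{u·d : u ∈ projOPT(ζ; β)}, the maximum being attained. -/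
/-!
If `ζ + t • d` is infeasible for all `t > 0`, the difference quotients are `+∞` because `z_LP(ζ)` is
finite by strong duality. Otherwise let `x₀` be optimal at `ζ`. A feasible point at `ζ + t₀ • d`
bounds `u ⬝ᵥ d` on `projOPT(ζ)`, so by strong duality `max {u ⬝ᵥ d | u ∈ projOPT(ζ)}` is attained
at some `u`, and the dual of that LP has an optimal `(x, μ)`: `x, μ ≥ 0`, `CC x ≤ d + μ ζ`,
`AC x = μ β` and `cC ⬝ᵥ x = u ⬝ᵥ d + μ z_LP(ζ)`. Then `(1 - s μ) x₀ + s x` is feasible at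
`ζ + s • d` with cost `z_LP(ζ) + s (u ⬝ᵥ d)`, and weak duality against `u` gives the reverse
inequality, so for `0 ≤ s ≤ 1 / (1 + μ)` the value function is affine along `d` with slope `u ⬝ᵥ d`.

Strong duality comes from Farkas' lemma, i.e. from separating a point from a finitely generated
cone; such a cone is closed by the exchange argument of conic Carathéodory.
-/

open Matrix Filter Topology Set

noncomputable section

/-- Primal feasibility for the restricted LP with data `(ζ, β)`. -/
def LPfeas {l m nc : ℕ} (CC : Matrix (Fin l) (Fin nc) ℝ) (AC : Matrix (Fin m) (Fin nc) ℝ)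
    (ζ : Fin l → ℝ) (β : Fin m → ℝ) (x : Fin nc → ℝ) : Prop :=
  (∀ j, 0 ≤ x j) ∧ CC.mulVec x ≤ ζ ∧ AC.mulVec x = β

/-- The restricted LP value function, taking the value `+∞` when infeasible. -/
def zLP {l m nc : ℕ} (cC : Fin nc → ℝ) (CC : Matrix (Fin l) (Fin nc) ℝ)
    (AC : Matrix (Fin m) (Fin nc) ℝ) (ζ : Fin l → ℝ) (β : Fin m → ℝ) : EReal :=
  sInf {y : EReal | ∃ x : Fin nc → ℝ, LPfeas CC AC ζ β x ∧ y = ((cC ⬝ᵥ x : ℝ) : EReal)}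

/-- The finite domain (feasibility region) of the restricted LP value function. -/
def CLP {l m nc : ℕ} (CC : Matrix (Fin l) (Fin nc) ℝ) (AC : Matrix (Fin m) (Fin nc) ℝ)
    (β : Fin m → ℝ) : Set (Fin l → ℝ) :=
  {ζ | ∃ x : Fin nc → ℝ, LPfeas CC AC ζ β x}

/-- The dual feasible region `P_D`. -/
def PD {l m nc : ℕ} (cC : Fin nc → ℝ) (CC : Matrix (Fin l) (Fin nc) ℝ)
    (AC : Matrix (Fin m) (Fin nc) ℝ) : Set ((Fin l → ℝ) × (Fin m → ℝ)) :=
  {uv | uv.1 ≤ 0 ∧ CC.transpose.mulVec uv.1 + AC.transpose.mulVec uv.2 ≤ cC}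

/-- Projection of the optimal face of the dual LP onto the `u`-coordinates. -/
def projOPT {l m nc : ℕ} (cC : Fin nc → ℝ) (CC : Matrix (Fin l) (Fin nc) ℝ)
    (AC : Matrix (Fin m) (Fin nc) ℝ) (ζ : Fin l → ℝ) (β : Fin m → ℝ) : Set (Fin l → ℝ) :=
  {u | ∃ v : Fin m → ℝ, (u, v) ∈ PD cC CC AC ∧
    ((ζ ⬝ᵥ u + β ⬝ᵥ v : ℝ) : EReal) = zLP cC CC AC ζ β}

/-- A real vector with natural-number entries. -/
def IsNatVec {r : ℕ} (x : Fin r → ℝ) : Prop := ∀ i, ∃ k : ℕ, x i = (k : ℝ)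

/-- The MILP feasible region `X_MO`. -/
def XMO {m nc r : ℕ} (AI : Matrix (Fin m) (Fin r) ℝ) (AC : Matrix (Fin m) (Fin nc) ℝ)
    (b : Fin m → ℝ) : Set ((Fin r → ℝ) × (Fin nc → ℝ)) :=
  {p | IsNatVec p.1 ∧ (∀ j, 0 ≤ p.2 j) ∧ AI.mulVec p.1 + AC.mulVec p.2 = b}

/-- The restricted feasible region `S(ζ)`. -/
def Sreg {l m nc r : ℕ} (AI : Matrix (Fin m) (Fin r) ℝ) (AC : Matrix (Fin m) (Fin nc) ℝ)
    (b : Fin m → ℝ) (CI : Matrix (Fin l) (Fin r) ℝ) (CC : Matrix (Fin l) (Fin nc) ℝ)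
    (ζ : Fin l → ℝ) : Set ((Fin r → ℝ) × (Fin nc → ℝ)) :=
  {p ∈ XMO AI AC b | CI.mulVec p.1 + CC.mulVec p.2 ≤ ζ}

/-- The restricted value function `z`, taking the value `+∞` when `S(ζ) = ∅`. -/
def zRVF {l m nc r : ℕ} (cI : Fin r → ℝ) (cC : Fin nc → ℝ) (AI : Matrix (Fin m) (Fin r) ℝ)
    (AC : Matrix (Fin m) (Fin nc) ℝ) (b : Fin m → ℝ) (CI : Matrix (Fin l) (Fin r) ℝ)
    (CC : Matrix (Fin l) (Fin nc) ℝ) (ζ : Fin l → ℝ) : EReal :=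
  sInf {y : EReal | ∃ p ∈ Sreg AI AC b CI CC ζ, y = ((cI ⬝ᵥ p.1 + cC ⬝ᵥ p.2 : ℝ) : EReal)}

/-- The finite domain `𝒞` of the restricted value function. -/
def Cdom {l m nc r : ℕ} (AI : Matrix (Fin m) (Fin r) ℝ) (AC : Matrix (Fin m) (Fin nc) ℝ)
    (b : Fin m → ℝ) (CI : Matrix (Fin l) (Fin r) ℝ) (CC : Matrix (Fin l) (Fin nc) ℝ) :
    Set (Fin l → ℝ) :=
  {ζ | (Sreg AI AC b CI CC ζ).Nonempty}

/-- The set `S_I` of integer parts of feasible solutions. -/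
def SI {m nc r : ℕ} (AI : Matrix (Fin m) (Fin r) ℝ) (AC : Matrix (Fin m) (Fin nc) ℝ)
    (b : Fin m → ℝ) : Set (Fin r → ℝ) :=
  {xI | ∃ xC : Fin nc → ℝ, (xI, xC) ∈ XMO AI AC b}

/-- The bounding function `z̄(ζ; x̂_I)`. -/
def zbar {l m nc r : ℕ} (cI : Fin r → ℝ) (cC : Fin nc → ℝ) (AI : Matrix (Fin m) (Fin r) ℝ)
    (AC : Matrix (Fin m) (Fin nc) ℝ) (b : Fin m → ℝ) (CI : Matrix (Fin l) (Fin r) ℝ)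
    (CC : Matrix (Fin l) (Fin nc) ℝ) (ζ : Fin l → ℝ) (xI : Fin r → ℝ) : EReal :=
  ((cI ⬝ᵥ xI : ℝ) : EReal) + zLP cC CC AC (ζ - CI.mulVec xI) (b - AI.mulVec xI)

/-- The set `S*_I(ζ)` of integer parts whose bounding function is active at `ζ`. -/
def SstarI {l m nc r : ℕ} (cI : Fin r → ℝ) (cC : Fin nc → ℝ) (AI : Matrix (Fin m) (Fin r) ℝ)
    (AC : Matrix (Fin m) (Fin nc) ℝ) (b : Fin m → ℝ) (CI : Matrix (Fin l) (Fin r) ℝ)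
    (CC : Matrix (Fin l) (Fin nc) ℝ) (ζ : Fin l → ℝ) : Set (Fin r → ℝ) :=
  {xI ∈ SI AI AC b | zbar cI cC AI AC b CI CC ζ xI = zRVF cI cC AI AC b CI CC ζ}

/-- A description of the restricted value function. -/
def IsDescription {l m nc r : ℕ} (cI : Fin r → ℝ) (cC : Fin nc → ℝ)
    (AI : Matrix (Fin m) (Fin r) ℝ) (AC : Matrix (Fin m) (Fin nc) ℝ) (b : Fin m → ℝ)
    (CI : Matrix (Fin l) (Fin r) ℝ) (CC : Matrix (Fin l) (Fin nc) ℝ)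
    (S : Set (Fin r → ℝ)) : Prop :=
  S ⊆ SI AI AC b ∧
  ∀ ζ ∈ Cdom AI AC b CI CC, ∃ xI ∈ S, ∃ xC : Fin nc → ℝ,
    (xI, xC) ∈ Sreg AI AC b CI CC ζ ∧
    ((cI ⬝ᵥ xI + cC ⬝ᵥ xC : ℝ) : EReal) = zRVF cI cC AI AC b CI CC ζ

/-- A minimal description of the restricted value function. -/
def IsMinimalDescription {l m nc r : ℕ} (cI : Fin r → ℝ) (cC : Fin nc → ℝ)
    (AI : Matrix (Fin m) (Fin r) ℝ) (AC : Matrix (Fin m) (Fin nc) ℝ) (b : Fin m → ℝ)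
    (CI : Matrix (Fin l) (Fin r) ℝ) (CC : Matrix (Fin l) (Fin nc) ℝ)
    (S : Set (Fin r → ℝ)) : Prop :=
  IsDescription cI cC AI AC b CI CC S ∧
  ∀ S' : Set (Fin r → ℝ), S' ⊂ S → ¬ IsDescription cI cC AI AC b CI CC S'

/-- One-sided directional derivative (as a limit in `EReal`). -/
def HasDirDeriv {l : ℕ} (f : (Fin l → ℝ) → EReal) (x d : Fin l → ℝ) (L : EReal) : Prop :=
  Tendsto (fun t : ℝ => ((t⁻¹ : ℝ) : EReal) * (f (x + t • d) - f x)) (𝓝[>] (0 : ℝ)) (𝓝 L)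

/-- The criterion-space vector `Cx ∈ ℝ^{ℓ+1}` of a feasible point. -/
def CritVec {l nc r : ℕ} (cI : Fin r → ℝ) (cC : Fin nc → ℝ) (CI : Matrix (Fin l) (Fin r) ℝ)
    (CC : Matrix (Fin l) (Fin nc) ℝ) (p : (Fin r → ℝ) × (Fin nc → ℝ)) : ℝ × (Fin l → ℝ) :=
  (cI ⬝ᵥ p.1 + cC ⬝ᵥ p.2, CI.mulVec p.1 + CC.mulVec p.2)

/-- Efficient solutions of the multiobjective MILP. -/
def IsEfficient {l m nc r : ℕ} (cI : Fin r → ℝ) (cC : Fin nc → ℝ)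
    (AI : Matrix (Fin m) (Fin r) ℝ) (AC : Matrix (Fin m) (Fin nc) ℝ) (b : Fin m → ℝ)
    (CI : Matrix (Fin l) (Fin r) ℝ) (CC : Matrix (Fin l) (Fin nc) ℝ)
    (p : (Fin r → ℝ) × (Fin nc → ℝ)) : Prop :=
  p ∈ XMO AI AC b ∧ ¬ ∃ q ∈ XMO AI AC b,
    CritVec cI cC CI CC q ≤ CritVec cI cC CI CC p ∧
    CritVec cI cC CI CC q ≠ CritVec cI cC CI CC p

/-- The upper approximation `z̄ᵏ` built from a set `Sk` of integer parts and bound `U`. -/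
def zbark {l m nc r : ℕ} (cI : Fin r → ℝ) (cC : Fin nc → ℝ) (AI : Matrix (Fin m) (Fin r) ℝ)
    (AC : Matrix (Fin m) (Fin nc) ℝ) (b : Fin m → ℝ) (CI : Matrix (Fin l) (Fin r) ℝ)
    (CC : Matrix (Fin l) (Fin nc) ℝ) (Sk : Set (Fin r → ℝ)) (U : ℝ) (ζ : Fin l → ℝ) : EReal :=
  min (sInf {y : EReal | ∃ xI ∈ Sk, y = zbar cI cC AI AC b CI CC ζ xI}) (U : EReal)

namespace PointedCone

section Hull

variable {E : Type*} [AddCommGroup E] [Module ℝ E]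

lemma exists_nonneg_sum_eq_of_mem_hull {s : Finset E} {x : E} (hx : x ∈ hull ℝ (s : Set E)) :
    ∃ f : E → ℝ, (∀ a, 0 ≤ f a) ∧ ∑ a ∈ s, f a • a = x := by
  obtain ⟨f, -, rfl⟩ := Submodule.mem_span_finset.1 hx
  exact ⟨fun a => f a, fun a => (f a).2, rfl⟩

lemma sum_smul_mem_hull {s : Finset E} {f : E → ℝ} (hf : ∀ a ∈ s, 0 ≤ f a) :
    ∑ a ∈ s, f a • a ∈ hull ℝ (s : Set E) :=
  Submodule.sum_mem _ fun a ha => (hull ℝ _).smul_mem (hf a ha) (subset_hull ha)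

/-- The exchange step of conic Carathéodory. -/
lemma exists_mem_hull_erase [DecidableEq E] {s : Finset E} {g : E → ℝ}
    (hg : ∑ a ∈ s, g a • a = 0) (hpos : ∃ a ∈ s, 0 < g a) {x : E} (hx : x ∈ hull ℝ (s : Set E)) :
    ∃ j ∈ s, x ∈ hull ℝ (s.erase j : Set E) := by
  obtain ⟨f, hf, rfl⟩ := exists_nonneg_sum_eq_of_mem_hull hx
  -- subtract the largest multiple `τ • g` keeping all coefficients nonnegative
  obtain ⟨j, hj, hmin⟩ := (s.filter (0 < g ·)).exists_min_image (fun a => f a / g a)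
    (by simpa [Finset.filter_nonempty_iff] using hpos)
  rw [Finset.mem_filter] at hj
  set τ := f j / g j
  have hτ : 0 ≤ τ := div_nonneg (hf j) hj.2.le
  have hnonneg : ∀ a ∈ s, 0 ≤ f a - τ * g a := by
    intro a ha
    rcases le_or_gt (g a) 0 with hga | hga
    · nlinarith [hf a]
    · have := hmin a (Finset.mem_filter.2 ⟨ha, hga⟩)
      rw [le_div_iff₀ hga] at this
      linarith
  have hsum : ∑ a ∈ s, f a • a = ∑ a ∈ s.erase j, (f a - τ * g a) • a := by
    rw [Finset.sum_erase _ (by simp [τ, hj.2.ne'])]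
    simp [sub_smul, Finset.sum_sub_distrib, mul_smul, ← Finset.smul_sum, hg]
  exact ⟨j, hj.1, hsum ▸ sum_smul_mem_hull fun a ha => hnonneg a (Finset.mem_of_mem_erase ha)⟩

end Hull

variable {E : Type*} [AddCommGroup E] [Module ℝ E] [TopologicalSpace E] [IsTopologicalAddGroup E]
  [ContinuousSMul ℝ E] [T2Space E]

theorem isClosed_hull_finset (s : Finset E) : IsClosed (hull ℝ (s : Set E) : Set E) := by
  classical
  induction s using Finset.strongInduction with
  | H s ih =>
  by_cases hli : LinearIndepOn ℝ id (s : Set E)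
  · set T := Fintype.linearCombination ℝ ((↑) : s → E)
    have hT : IsClosedEmbedding T := LinearMap.isClosedEmbedding_of_injective
      (LinearMap.ker_eq_bot.2 (linearIndependent_iff_injective_fintypeLinearCombination.1 hli))
    have hs : (hull ℝ (s : Set E) : Set E) = T '' Ici 0 := by
      ext x
      refine ⟨fun hx => ?_, ?_⟩
      · obtain ⟨f, rfl⟩ := Submodule.mem_span_finset'.1 hx
        exact ⟨fun a => f a, fun a => (f a).2, by simp [T, Fintype.linearCombination_apply]⟩
      · rintro ⟨v, hv, rfl⟩
        exact Submodule.sum_mem _ fun a _ => (hull ℝ _).smul_mem (hv a) (subset_hull a.2)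
    exact hs ▸ hT.isClosedMap _ isClosed_Ici
  · obtain ⟨g, hg, hpos⟩ : ∃ g : E → ℝ, ∑ a ∈ s, g a • a = 0 ∧ ∃ a ∈ s, 0 < g a := by
      obtain ⟨g, hg, a, ha, hga⟩ := not_linearIndepOn_finset_iff.1 hli
      rcases hga.lt_or_gt with hneg | hpos
      · exact ⟨-g, by simpa [neg_smul] using hg, a, ha, by simpa⟩
      · exact ⟨g, by simpa using hg, a, ha, hpos⟩
    have hs : (hull ℝ (s : Set E) : Set E) = ⋃ j ∈ s, (hull ℝ (s.erase j : Set E) : Set E) := by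
      refine subset_antisymm (fun x hx => ?_) (iUnion₂_subset fun j _ => ?_)
      · obtain ⟨j, hj, hx⟩ := exists_mem_hull_erase hg hpos hx
        exact mem_biUnion hj hx
      · exact Submodule.span_mono (by simp)
    exact hs ▸ isClosed_biUnion_finset fun j hj => ih _ (Finset.erase_ssubset hj)

theorem isClosed_hull_range {ι : Type*} [Finite ι] (v : ι → E) :
    IsClosed (hull ℝ (range v) : Set E) := by
  classical
  have := Fintype.ofFinite ι
  simpa using isClosed_hull_finset (Finset.univ.image v)

end PointedCone

lemma exists_sumElim {α β γ : Type*} (w : α ⊕ β → γ) : ∃ p q, w = Sum.elim p q :=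
  ⟨_, _, (Sum.elim_comp_inl_inr w).symm⟩

lemma exists_sumElim_unit {α : Type*} (w : α ⊕ Unit → ℝ) : ∃ x t, w = Sum.elim x fun _ => t :=
  ⟨w ∘ Sum.inl, w (Sum.inr ()), by ext (_ | _) <;> rfl⟩

lemma exists_nonneg_lt_add_mul (a δ : ℝ) {r : ℝ} (hr : 0 < r) : ∃ t, 0 ≤ t ∧ δ < a + t * r := by
  refine ⟨max 0 ((δ - a + 1) / r), le_max_left _ _, ?_⟩
  have := mul_le_mul_of_nonneg_right (le_max_right 0 ((δ - a + 1) / r)) hr.le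
  rw [div_mul_cancel₀ _ hr.ne'] at this
  linarith

section LinearProgramming

variable {κ ι : Type*} [Fintype κ] [Fintype ι] {A : Matrix κ ι ℝ} {b : κ → ℝ} {c : ι → ℝ}

theorem StrongDual.exists_eq_dotProduct (f : StrongDual ℝ (κ → ℝ)) :
    ∃ y : κ → ℝ, ∀ z, f z = z ⬝ᵥ y := by
  classical
  refine ⟨fun k => f (Pi.single k 1), fun z => ?_⟩
  conv_lhs => rw [← Finset.univ_sum_single z]
  simp only [map_sum, dotProduct]
  refine Finset.sum_congr rfl fun k _ => ?_
  rw [← smul_eq_mul, ← map_smul, ← Pi.single_smul, smul_eq_mul, mul_one]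

theorem farkas (h : ¬∃ x, 0 ≤ x ∧ A *ᵥ x = b) : ∃ y, 0 ≤ y ᵥ* A ∧ b ⬝ᵥ y < 0 := by
  let C : ProperCone ℝ (κ → ℝ) :=
    ⟨PointedCone.hull ℝ (range fun i => Aᵀ i), PointedCone.isClosed_hull_range _⟩
  have hb : b ∉ C := by
    intro hb
    obtain ⟨w, hw⟩ := (Submodule.mem_span_range_iff_exists_fun NNReal).1 hb
    exact h ⟨fun i => w i, fun i => (w i).2, by rw [← hw, mulVec_eq_sum]; simp; rfl⟩
  obtain ⟨f, hfC, hfb⟩ := C.hyperplane_separation_point hb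
  obtain ⟨y, hy⟩ := f.exists_eq_dotProduct
  refine ⟨y, fun i => ?_, by rwa [← hy]⟩
  have := hfC _ (PointedCone.subset_hull (mem_range_self i))
  rwa [hy, dotProduct_comm] at this

theorem farkas_vecMul_le (h : ¬∃ y, y ᵥ* A ≤ c) : ∃ x, 0 ≤ x ∧ A *ᵥ x = 0 ∧ c ⬝ᵥ x < 0 := by
  classical
  -- `y ᵥ* A ≤ c` is solvable iff `Aᵀ p - Aᵀ q + s = c` is, with `p, q, s ≥ 0`
  obtain ⟨x, hx, hcx⟩ := farkas (A := fromCols Aᵀ (fromCols (-Aᵀ) (1 : Matrix ι ι ℝ)))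
    (b := c) <| by
    rintro ⟨w, hw, hwc⟩
    obtain ⟨p, w, rfl⟩ := exists_sumElim w
    obtain ⟨q, s, rfl⟩ := exists_sumElim w
    rw [← Sum.elim_zero_zero, ← Sum.elim_zero_zero, Sum.elim_le_elim_iff,
      Sum.elim_le_elim_iff] at hw
    simp only [fromCols_mulVec_sumElim, neg_mulVec, one_mulVec] at hwc
    refine h ⟨p - q, ?_⟩
    rw [← mulVec_transpose, mulVec_sub, ← hwc]
    intro i
    simpa [sub_eq_add_neg] using hw.2.2 i
  rw [vecMul_fromCols, vecMul_fromCols, vecMul_neg, vecMul_transpose, vecMul_one,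
    ← Sum.elim_zero_zero, ← Sum.elim_zero_zero, Sum.elim_le_elim_iff, Sum.elim_le_elim_iff] at hx
  exact ⟨x, hx.2.2, le_antisymm (neg_nonneg.1 hx.2.1) hx.1, hcx⟩

theorem weak_duality {x : ι → ℝ} {y : κ → ℝ} (hx : 0 ≤ x) (hAx : A *ᵥ x = b) (hy : y ᵥ* A ≤ c) :
    b ⬝ᵥ y ≤ c ⬝ᵥ x :=
  calc b ⬝ᵥ y = y ᵥ* A ⬝ᵥ x := by rw [← hAx, dotProduct_comm, dotProduct_mulVec]
    _ ≤ c ⬝ᵥ x := dotProduct_le_dotProduct_of_nonneg_right hy hx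

omit [Fintype κ] in
lemma fromBlocks_replicateRow_mulVec (x : ι → ℝ) (s : ℝ) :
    fromBlocks A 0 (replicateRow Unit c) (1 : Matrix Unit Unit ℝ) *ᵥ Sum.elim x (fun _ => s) =
      Sum.elim (A *ᵥ x) fun _ => c ⬝ᵥ x + s := by
  ext (_ | _) <;> simp [fromBlocks_mulVec, replicateRow_mulVec_eq_const]

omit [Fintype ι] in
lemma vecMul_fromBlocks_replicateRow (y : κ → ℝ) (l : ℝ) :
    Sum.elim y (fun _ => l) ᵥ* fromBlocks A 0 (replicateRow Unit c) (1 : Matrix Unit Unit ℝ) =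
      Sum.elim (y ᵥ* A + l • c) fun _ => l := by
  ext (_ | _) <;> simp [vecMul, dotProduct, mul_comm]

omit [Fintype κ] in
lemma fromCols_replicateCol_mulVec (x : ι → ℝ) (t : ℝ) :
    fromCols A (replicateCol Unit b) *ᵥ Sum.elim x (fun _ => t) = A *ᵥ x + t • b := by
  ext; simp [mulVec, dotProduct, mul_comm]

omit [Fintype ι] in
lemma vecMul_fromCols_replicateCol (y : κ → ℝ) :
    y ᵥ* fromCols A (replicateCol Unit b) = Sum.elim (y ᵥ* A) fun _ => y ⬝ᵥ b := by
  ext (_ | _) <;> simp [vecMul, dotProduct]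

theorem exists_primal_le_of_dual_bdd {δ : ℝ} (hD : ∃ y, y ᵥ* A ≤ c)
    (hδ : ∀ y, y ᵥ* A ≤ c → b ⬝ᵥ y ≤ δ) : ∃ x, 0 ≤ x ∧ A *ᵥ x = b ∧ c ⬝ᵥ x ≤ δ := by
  by_contra hne
  -- the last variable is the slack `s` in `c ⬝ᵥ x + s = δ`
  obtain ⟨z, hz, hzb⟩ := farkas (A := fromBlocks A 0 (replicateRow Unit c) (1 : Matrix Unit Unit ℝ))
    (b := Sum.elim b fun _ => δ) <| by
    rintro ⟨w, hw, hwb⟩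
    obtain ⟨x, s, rfl⟩ := exists_sumElim_unit w
    rw [fromBlocks_replicateRow_mulVec] at hwb
    have hcx : c ⬝ᵥ x + s = δ := congrFun hwb (Sum.inr ())
    have hs : 0 ≤ s := hw (Sum.inr ())
    exact hne ⟨x, fun i => hw (Sum.inl i), funext fun k => congrFun hwb (Sum.inl k),
      by linarith⟩
  obtain ⟨y, l, rfl⟩ := exists_sumElim_unit z
  rw [vecMul_fromBlocks_replicateRow, ← Sum.elim_zero_zero, Sum.elim_le_elim_iff] at hz
  have hyA : ∀ i, 0 ≤ (y ᵥ* A) i + l * c i := hz.1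
  have hl : 0 ≤ l := hz.2 ()
  have hby : b ⬝ᵥ y + δ * l < 0 := by simpa [sumElim_dotProduct_sumElim, dotProduct] using hzb
  obtain ⟨y₀, hy₀⟩ := hD
  rcases hl.eq_or_lt with rfl | hl
  · -- `-y` is a direction of recession of the dual along which `b ⬝ᵥ ·` increases
    obtain ⟨t, ht, hlt⟩ := exists_nonneg_lt_add_mul (b ⬝ᵥ y₀) δ (r := -(b ⬝ᵥ y)) (by linarith)
    have := hδ (y₀ - t • y) fun i => by
      simp only [sub_vecMul, smul_vecMul, Pi.sub_apply, Pi.smul_apply, smul_eq_mul]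
      nlinarith [hy₀ i, hyA i]
    rw [dotProduct_sub, dotProduct_smul, smul_eq_mul] at this
    linarith
  · have := hδ (-l⁻¹ • y) fun i => by
      rw [smul_vecMul, Pi.smul_apply, smul_eq_mul, neg_mul, neg_le, inv_mul_eq_div,
        le_div_iff₀ hl]
      linarith [hyA i]
    rw [dotProduct_smul, smul_eq_mul, neg_mul, neg_le, inv_mul_eq_div, le_div_iff₀ hl] at this
    linarith

theorem exists_dual_ge_of_primal_bdd {γ : ℝ} (hP : ∃ x, 0 ≤ x ∧ A *ᵥ x = b)
    (hγ : ∀ x, 0 ≤ x → A *ᵥ x = b → γ ≤ c ⬝ᵥ x) : ∃ y, y ᵥ* A ≤ c ∧ γ ≤ b ⬝ᵥ y := by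
  by_contra hne
  -- the last column encodes the constraint `-(y ⬝ᵥ b) ≤ -γ`
  obtain ⟨z, hz, hAz, hcz⟩ := farkas_vecMul_le (A := fromCols A (replicateCol Unit (-b)))
    (c := Sum.elim c fun _ => -γ) <| by
    rintro ⟨y, hy⟩
    rw [vecMul_fromCols_replicateCol, Sum.elim_le_elim_iff] at hy
    have := hy.2 ()
    simp only [dotProduct_neg, neg_le_neg_iff] at this
    exact hne ⟨y, hy.1, by rwa [dotProduct_comm]⟩
  obtain ⟨x, t, rfl⟩ := exists_sumElim_unit z
  rw [fromCols_replicateCol_mulVec, smul_neg, ← sub_eq_add_neg, sub_eq_zero] at hAz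
  have hx : 0 ≤ x := fun i => hz (Sum.inl i)
  have ht : 0 ≤ t := hz (Sum.inr ())
  have hcx : c ⬝ᵥ x - γ * t < 0 := by
    simpa [sumElim_dotProduct_sumElim, dotProduct, sub_eq_add_neg] using hcz
  obtain ⟨x₀, hx₀, hAx₀⟩ := hP
  rcases ht.eq_or_lt with rfl | ht
  · -- `x` is a direction of recession of the primal along which `c ⬝ᵥ ·` decreases
    obtain ⟨s, hs, hlt⟩ := exists_nonneg_lt_add_mul (-(c ⬝ᵥ x₀)) (-γ) (r := -(c ⬝ᵥ x)) (by linarith)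
    have := hγ (x₀ + s • x) (add_nonneg hx₀ (smul_nonneg hs hx))
      (by rw [mulVec_add, mulVec_smul, hAx₀, hAz, zero_smul, smul_zero, add_zero])
    rw [dotProduct_add, dotProduct_smul, smul_eq_mul] at this
    linarith
  · have := hγ (t⁻¹ • x) (smul_nonneg (inv_nonneg.2 ht.le) hx)
      (by rw [mulVec_smul, hAz, smul_smul, inv_mul_cancel₀ ht.ne', one_smul])
    rw [dotProduct_smul, smul_eq_mul, inv_mul_eq_div, le_div_iff₀ ht] at this
    linarith

theorem strong_duality (hP : ∃ x, 0 ≤ x ∧ A *ᵥ x = b) (hD : ∃ y, y ᵥ* A ≤ c) :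
    ∃ x y, 0 ≤ x ∧ A *ᵥ x = b ∧ y ᵥ* A ≤ c ∧ c ⬝ᵥ x = b ⬝ᵥ y := by
  obtain ⟨x₀, hx₀, hAx₀⟩ := hP
  set S := (b ⬝ᵥ ·) '' {y | y ᵥ* A ≤ c}
  have hS : BddAbove S := ⟨c ⬝ᵥ x₀, by rintro _ ⟨y, hy, rfl⟩; exact weak_duality hx₀ hAx₀ hy⟩
  have hSne : S.Nonempty := Set.Nonempty.image _ hD
  obtain ⟨x, hx, hAx, hcx⟩ := exists_primal_le_of_dual_bdd hD fun y hy => le_csSup hS ⟨y, hy, rfl⟩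
  obtain ⟨y, hy, hby⟩ := exists_dual_ge_of_primal_bdd ⟨x₀, hx₀, hAx₀⟩ fun x' hx' hAx' =>
    hcx.trans <| csSup_le hSne <| by rintro _ ⟨y, hy, rfl⟩; exact weak_duality hx' hAx' hy
  exact ⟨x, y, hx, hAx, hy, le_antisymm hby (weak_duality hx hAx hy)⟩

/-- Strong duality for the second objective `b'` over the face `{y | y ᵥ* A ≤ c, g ≤ b ⬝ᵥ y}`. -/
theorem strong_duality_face {g M : ℝ} (b' : κ → ℝ) (hF : ∃ y, y ᵥ* A ≤ c ∧ g ≤ b ⬝ᵥ y)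
    (hM : ∀ y, y ᵥ* A ≤ c → g ≤ b ⬝ᵥ y → b' ⬝ᵥ y ≤ M) :
    ∃ y, y ᵥ* A ≤ c ∧ g ≤ b ⬝ᵥ y ∧ ∃ x μ, 0 ≤ x ∧ 0 ≤ μ ∧ A *ᵥ x = b' + μ • b ∧
      c ⬝ᵥ x = b' ⬝ᵥ y + μ * g := by
  -- the face is the dual feasible set of the matrix `[A | -b]` with costs `(c, -g)`
  have hface : ∀ y, y ᵥ* fromCols A (replicateCol Unit (-b)) ≤ Sum.elim c (fun _ => -g) ↔
      y ᵥ* A ≤ c ∧ g ≤ b ⬝ᵥ y := fun y => by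
    rw [vecMul_fromCols_replicateCol, Sum.elim_le_elim_iff, dotProduct_neg, dotProduct_comm]
    simp [Pi.le_def]
  have hD : ∃ y, y ᵥ* fromCols A (replicateCol Unit (-b)) ≤ Sum.elim c (fun _ => -g) :=
    hF.imp fun y hy => (hface y).2 hy
  obtain ⟨z, hz, hAz, -⟩ := exists_primal_le_of_dual_bdd (b := b') hD
    fun y hy => hM y ((hface y).1 hy).1 ((hface y).1 hy).2
  obtain ⟨z, y, hz, hAz, hy, hcz⟩ := strong_duality ⟨z, hz, hAz⟩ hD
  obtain ⟨x, μ, rfl⟩ := exists_sumElim_unit z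
  rw [fromCols_replicateCol_mulVec, smul_neg, ← sub_eq_add_neg, sub_eq_iff_eq_add] at hAz
  refine ⟨y, ((hface y).1 hy).1, ((hface y).1 hy).2, x, μ, fun i => hz (Sum.inl i),
    hz (Sum.inr ()), hAz, ?_⟩
  have hg : (fun _ : Unit => -g) ⬝ᵥ (fun _ => μ) = -(μ * g) := by simp [dotProduct, mul_comm]
  rw [sumElim_dotProduct_sumElim, hg] at hcz
  linarith

end LinearProgramming

section DirDeriv

variable {l : ℕ} {f : (Fin l → ℝ) → EReal} {x d : Fin l → ℝ} {g : ℝ}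

lemma hasDirDeriv_top (hx : f x = g) (h : ∀ t : ℝ, 0 < t → f (x + t • d) = ⊤) :
    HasDirDeriv f x d ⊤ :=
  tendsto_const_nhds.congr' <| eventually_nhdsWithin_of_forall fun t (ht : 0 < t) => by
    dsimp only
    rw [h t ht, hx, EReal.top_sub_coe, EReal.mul_top_of_pos (by exact_mod_cast inv_pos.2 ht)]

lemma hasDirDeriv_of_eq_add_mul {L ε : ℝ} (hε : 0 < ε) (hx : f x = g)
    (h : ∀ t ∈ Ioo 0 ε, f (x + t • d) = (g + t * L : ℝ)) : HasDirDeriv f x d L := by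
  refine tendsto_const_nhds.congr' ?_
  filter_upwards [Ioo_mem_nhdsGT hε] with t ht
  rw [h t ht, hx, ← EReal.coe_sub, ← EReal.coe_mul, add_sub_cancel_left,
    inv_mul_cancel_left₀ ht.1.ne']

end DirDeriv

section RestrictedLP

variable {l m nc : ℕ} {cC : Fin nc → ℝ} {CC : Matrix (Fin l) (Fin nc) ℝ}
  {AC : Matrix (Fin m) (Fin nc) ℝ} {ζ : Fin l → ℝ} {β : Fin m → ℝ}

/-- The restricted LP in standard form: `CC x + s = ζ`, `AC x = β` with `x, s ≥ 0`. -/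
def slackMatrix (CC : Matrix (Fin l) (Fin nc) ℝ) (AC : Matrix (Fin m) (Fin nc) ℝ) :
    Matrix (Fin l ⊕ Fin m) (Fin nc ⊕ Fin l) ℝ :=
  fromBlocks CC 1 AC 0

lemma slackMatrix_mulVec (x : Fin nc → ℝ) (s : Fin l → ℝ) :
    slackMatrix CC AC *ᵥ Sum.elim x s = Sum.elim (CC *ᵥ x + s) (AC *ᵥ x) := by
  simp [slackMatrix, fromBlocks_mulVec]

lemma LPfeas_iff_exists_slack {x : Fin nc → ℝ} : LPfeas CC AC ζ β x ↔
    ∃ s, 0 ≤ Sum.elim x s ∧ slackMatrix CC AC *ᵥ Sum.elim x s = Sum.elim ζ β := by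
  simp only [slackMatrix_mulVec, ← Sum.elim_zero_zero, Sum.elim_le_elim_iff, Sum.elim_eq_iff,
    ← eq_sub_iff_add_eq']
  constructor
  · rintro ⟨hx, hCx, hAx⟩
    exact ⟨_, ⟨hx, sub_nonneg.2 hCx⟩, rfl, hAx⟩
  · rintro ⟨s, ⟨hx, hs⟩, rfl, hAx⟩
    exact ⟨hx, sub_nonneg.1 hs, hAx⟩

lemma sumElim_vecMul_slackMatrix_le_iff {u : Fin l → ℝ} {v : Fin m → ℝ} :
    Sum.elim u v ᵥ* slackMatrix CC AC ≤ Sum.elim cC 0 ↔ (u, v) ∈ PD cC CC AC := by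
  rw [slackMatrix, vecMul_fromBlocks]
  simp [PD, ← mulVec_transpose, and_comm]

lemma LPfeas.dotProduct_le {x : Fin nc → ℝ} {u : Fin l → ℝ} {v : Fin m → ℝ}
    (hx : LPfeas CC AC ζ β x) (huv : (u, v) ∈ PD cC CC AC) : ζ ⬝ᵥ u + β ⬝ᵥ v ≤ cC ⬝ᵥ x := by
  obtain ⟨s, hs, hAs⟩ := LPfeas_iff_exists_slack.1 hx
  simpa [sumElim_dotProduct_sumElim] using
    weak_duality hs hAs (sumElim_vecMul_slackMatrix_le_iff.2 huv)

lemma zLP_le {x : Fin nc → ℝ} (hx : LPfeas CC AC ζ β x) : zLP cC CC AC ζ β ≤ (cC ⬝ᵥ x : ℝ) :=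
  sInf_le ⟨x, hx, rfl⟩

lemma le_zLP {u : Fin l → ℝ} {v : Fin m → ℝ} (huv : (u, v) ∈ PD cC CC AC) :
    ((ζ ⬝ᵥ u + β ⬝ᵥ v : ℝ) : EReal) ≤ zLP cC CC AC ζ β :=
  le_sInf <| by
    rintro _ ⟨x, hx, rfl⟩
    exact EReal.coe_le_coe_iff.2 (hx.dotProduct_le huv)

lemma zLP_eq_top (hζ : ζ ∉ CLP CC AC β) : zLP cC CC AC ζ β = ⊤ := by
  rw [zLP, sInf_eq_top]
  rintro _ ⟨x, hx, -⟩
  exact absurd ⟨x, hx⟩ hζ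

lemma zLP_eq_of_dotProduct_eq {x : Fin nc → ℝ} {u : Fin l → ℝ} {v : Fin m → ℝ}
    (hx : LPfeas CC AC ζ β x) (huv : (u, v) ∈ PD cC CC AC) (h : cC ⬝ᵥ x = ζ ⬝ᵥ u + β ⬝ᵥ v) :
    zLP cC CC AC ζ β = (cC ⬝ᵥ x : ℝ) :=
  (zLP_le hx).antisymm (h ▸ le_zLP huv)

theorem exists_LPfeas_dotProduct_eq (hζ : ζ ∈ CLP CC AC β) (hPD : (PD cC CC AC).Nonempty) :
    ∃ x u v, LPfeas CC AC ζ β x ∧ (u, v) ∈ PD cC CC AC ∧ cC ⬝ᵥ x = ζ ⬝ᵥ u + β ⬝ᵥ v := by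
  obtain ⟨x₀, hx₀⟩ := hζ
  obtain ⟨⟨u₀, v₀⟩, huv₀⟩ := hPD
  obtain ⟨s₀, hs₀, hAs₀⟩ := LPfeas_iff_exists_slack.1 hx₀
  obtain ⟨w, y, hw, hAw, hy, hcw⟩ :=
    strong_duality ⟨_, hs₀, hAs₀⟩ ⟨_, sumElim_vecMul_slackMatrix_le_iff.2 huv₀⟩
  obtain ⟨x, s, rfl⟩ := exists_sumElim w
  obtain ⟨u, v, rfl⟩ := exists_sumElim y
  refine ⟨x, u, v, LPfeas_iff_exists_slack.2 ⟨s, hw, hAw⟩,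
    sumElim_vecMul_slackMatrix_le_iff.1 hy, ?_⟩
  simpa [sumElim_dotProduct_sumElim] using hcw

lemma dotProduct_le_of_mem_projOPT {u d : Fin l → ℝ} {g t L : ℝ}
    (hu : u ∈ projOPT cC CC AC ζ β) (hz : zLP cC CC AC ζ β = g) (ht : 0 < t)
    (hle : zLP cC CC AC (ζ + t • d) β ≤ (g + t * L : ℝ)) : u ⬝ᵥ d ≤ L := by
  obtain ⟨v, huv, hv⟩ := hu
  rw [hz, EReal.coe_eq_coe_iff] at hv
  have := EReal.coe_le_coe_iff.1 ((le_zLP huv).trans hle)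
  rw [add_dotProduct, smul_dotProduct, smul_eq_mul, dotProduct_comm d] at this
  exact le_of_mul_le_mul_left (by linarith) ht

/-- An optimal `u` of `max {u ⬝ᵥ d | u ∈ projOPT}` together with an optimal solution `(x, μ)` of
the dual of that problem. -/
theorem exists_mem_projOPT_certificate {x₀ : Fin nc → ℝ} {u₀ : Fin l → ℝ} {v₀ : Fin m → ℝ}
    {d : Fin l → ℝ} {M : ℝ} (hx₀ : LPfeas CC AC ζ β x₀) (huv₀ : (u₀, v₀) ∈ PD cC CC AC)
    (h₀ : cC ⬝ᵥ x₀ = ζ ⬝ᵥ u₀ + β ⬝ᵥ v₀) (hM : ∀ u ∈ projOPT cC CC AC ζ β, u ⬝ᵥ d ≤ M) :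
    ∃ u ∈ projOPT cC CC AC ζ β, ∃ (x : Fin nc → ℝ) (μ : ℝ), 0 ≤ x ∧ 0 ≤ μ ∧
      CC *ᵥ x ≤ d + μ • ζ ∧ AC *ᵥ x = μ • β ∧ cC ⬝ᵥ x = u ⬝ᵥ d + μ * (cC ⬝ᵥ x₀) := by
  have hface : ∀ u v, (u, v) ∈ PD cC CC AC → cC ⬝ᵥ x₀ ≤ ζ ⬝ᵥ u + β ⬝ᵥ v →
      u ∈ projOPT cC CC AC ζ β := fun u v huv h =>
    ⟨v, huv, by rw [zLP_eq_of_dotProduct_eq hx₀ huv₀ h₀, (hx₀.dotProduct_le huv).antisymm h]⟩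
  obtain ⟨y, hy, hgy, w, μ, hw, hμ, hAw, hcw⟩ := strong_duality_face (A := slackMatrix CC AC)
    (b := Sum.elim ζ β) (c := Sum.elim cC 0) (g := cC ⬝ᵥ x₀) (M := M) (Sum.elim d 0)
    ⟨_, sumElim_vecMul_slackMatrix_le_iff.2 huv₀, by simp [sumElim_dotProduct_sumElim, h₀]⟩
    fun y hy hgy => by
      obtain ⟨u, v, rfl⟩ := exists_sumElim y
      rw [sumElim_vecMul_slackMatrix_le_iff] at hy
      rw [sumElim_dotProduct_sumElim] at hgy
      simpa [sumElim_dotProduct_sumElim, dotProduct_comm d] using hM u (hface u v hy hgy)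
  obtain ⟨u, v, rfl⟩ := exists_sumElim y
  obtain ⟨x, s, rfl⟩ := exists_sumElim w
  rw [sumElim_vecMul_slackMatrix_le_iff] at hy
  rw [sumElim_dotProduct_sumElim] at hgy
  rw [slackMatrix_mulVec] at hAw
  have hCx : CC *ᵥ x + s = d + μ • ζ := funext fun i => congrFun hAw (Sum.inl i)
  have hAx : AC *ᵥ x = μ • β := funext fun i => by simpa using congrFun hAw (Sum.inr i)
  rw [← Sum.elim_zero_zero, Sum.elim_le_elim_iff] at hw
  refine ⟨u, hface u v hy hgy, x, μ, hw.1, hμ, hCx ▸ le_add_of_nonneg_right hw.2, hAx, ?_⟩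
  simpa [sumElim_dotProduct_sumElim, dotProduct_comm d] using hcw

variable {x₀ x : Fin nc → ℝ} {d : Fin l → ℝ} {μ s : ℝ}

lemma LPfeas.smul_add_smul (hx₀ : LPfeas CC AC ζ β x₀) (hx : 0 ≤ x) (hCx : CC *ᵥ x ≤ d + μ • ζ)
    (hAx : AC *ᵥ x = μ • β) (hs : 0 ≤ s) (hsμ : s * μ ≤ 1) :
    LPfeas CC AC (ζ + s • d) β ((1 - s * μ) • x₀ + s • x) := by
  obtain ⟨hx₀, hCx₀, hAx₀⟩ := hx₀
  refine ⟨fun j => ?_, fun i => ?_, ?_⟩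
  · have : 0 ≤ x j := hx j
    have := hx₀ j
    simp only [Pi.add_apply, Pi.smul_apply, smul_eq_mul]
    nlinarith
  · have h₁ := mul_le_mul_of_nonneg_left (hCx₀ i) (sub_nonneg.2 hsμ)
    have h₂ := mul_le_mul_of_nonneg_left (hCx i) hs
    simp only [mulVec_add, mulVec_smul, Pi.add_apply, Pi.smul_apply, smul_eq_mul] at h₂ ⊢
    nlinarith
  · rw [mulVec_add, mulVec_smul, mulVec_smul, hAx₀, hAx, smul_smul, ← add_smul]
    simp

lemma zLP_add_smul_eq {u : Fin l → ℝ} (hx₀ : LPfeas CC AC ζ β x₀)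
    (hz : zLP cC CC AC ζ β = (cC ⬝ᵥ x₀ : ℝ)) (hu : u ∈ projOPT cC CC AC ζ β) (hx : 0 ≤ x)
    (hCx : CC *ᵥ x ≤ d + μ • ζ) (hAx : AC *ᵥ x = μ • β)
    (hcx : cC ⬝ᵥ x = u ⬝ᵥ d + μ * (cC ⬝ᵥ x₀)) (hs : 0 ≤ s) (hsμ : s * μ ≤ 1) :
    zLP cC CC AC (ζ + s • d) β = (cC ⬝ᵥ x₀ + s * (u ⬝ᵥ d) : ℝ) := by
  obtain ⟨v, huv, hv⟩ := hu
  rw [hz, EReal.coe_eq_coe_iff] at hv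
  refine le_antisymm ((zLP_le (hx₀.smul_add_smul hx hCx hAx hs hsμ)).trans_eq ?_)
    ((le_zLP huv).trans_eq' ?_) <;> congr 1
  · rw [dotProduct_add, dotProduct_smul, dotProduct_smul, hcx, smul_eq_mul, smul_eq_mul]
    ring
  · rw [add_dotProduct, smul_dotProduct, smul_eq_mul, dotProduct_comm d]
    linarith

end RestrictedLP

theorem stmt_4 {l m nc : ℕ} (cC : Fin nc → ℝ) (CC : Matrix (Fin l) (Fin nc) ℝ) (AC : Matrix (Fin m) (Fin nc) ℝ)
    (β : Fin m → ℝ)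
    (hPD : (PD cC CC AC).Nonempty)
    (ζ : Fin l → ℝ) (hζ : ζ ∈ CLP CC AC β) (d : Fin l → ℝ) :
    ((∀ t : ℝ, 0 < t → ζ + t • d ∉ CLP CC AC β) →
      HasDirDeriv (fun ζ' => zLP cC CC AC ζ' β) ζ d ⊤) ∧
    ((∃ t : ℝ, 0 < t ∧ ζ + t • d ∈ CLP CC AC β) →
      (∃ ε > (0 : ℝ), ∀ t ∈ Set.Icc (0 : ℝ) ε, ζ + t • d ∈ CLP CC AC β) ∧
      ∃ L : ℝ, HasDirDeriv (fun ζ' => zLP cC CC AC ζ' β) ζ d (L : EReal) ∧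
        (∃ u ∈ projOPT cC CC AC ζ β, u ⬝ᵥ d = L) ∧
        ∀ u ∈ projOPT cC CC AC ζ β, u ⬝ᵥ d ≤ L) := by
  obtain ⟨x₀, u₀, v₀, hx₀, huv₀, h₀⟩ := exists_LPfeas_dotProduct_eq hζ hPD
  have hz := zLP_eq_of_dotProduct_eq hx₀ huv₀ h₀
  refine ⟨fun hinf => hasDirDeriv_top hz fun t ht => zLP_eq_top (hinf t ht),
    fun ⟨t₀, ht₀, x₁, hx₁⟩ => ?_⟩
  obtain ⟨u, hu, x, μ, hx, hμ, hCx, hAx, hcx⟩ := exists_mem_projOPT_certificate hx₀ huv₀ h₀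
    (M := (cC ⬝ᵥ x₁ - cC ⬝ᵥ x₀) / t₀) fun u hu => dotProduct_le_of_mem_projOPT hu hz ht₀
      (by rw [mul_div_cancel₀ _ ht₀.ne', add_sub_cancel]; exact zLP_le hx₁)
  set ε := (1 + μ)⁻¹
  have hε : 0 < ε := by positivity
  have hεμ : ∀ s ∈ Icc 0 ε, s * μ ≤ 1 := fun s hs =>
    calc s * μ ≤ s * (1 + μ) := by nlinarith [hs.1]
      _ ≤ ε * (1 + μ) := mul_le_mul_of_nonneg_right hs.2 (by positivity)
      _ = 1 := inv_mul_cancel₀ (by positivity)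
  have hval : ∀ s ∈ Icc 0 ε, zLP cC CC AC (ζ + s • d) β = (cC ⬝ᵥ x₀ + s * (u ⬝ᵥ d) : ℝ) :=
    fun s hs => zLP_add_smul_eq hx₀ hz hu hx hCx hAx hcx hs.1 (hεμ s hs)
  refine ⟨⟨ε, hε, fun s hs => ⟨_, hx₀.smul_add_smul hx hCx hAx hs.1 (hεμ s hs)⟩⟩, u ⬝ᵥ d,
    hasDirDeriv_of_eq_add_mul hε hz fun t ht => hval t (Ioo_subset_Icc_self ht), ⟨u, hu, rfl⟩,
    fun u' hu' => dotProduct_le_of_mem_projOPT hu' hz hε (hval ε ⟨hε.le, le_rfl⟩).le⟩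
end
end

section
/- Let ζ ∈ 𝒞. The following are equivalent: (i) every efficient solution (x_I, x_C) ∈ X_MO with c⁰_I·x_I + c⁰_C·x_C = z(ζ) and C_I^{1:ℓ} x_I + C_C^{1:ℓ} x_C ≤ ζ componentwise satisfies C_I^{1:ℓ} x_I + C_C^{1:ℓ} x_C = ζ; (ii) ∇_d z(ζ) > 0 (a value in ℝ ∪ {+∞}) for every d ∈ ℝ^ℓ with d ≤ 0 componentwise and d ≠ 0. -/
open Matrix Filter Topology Set

noncomputable section

/-!
Along a ray `ζ + t • d` with `d ≤ 0`, the value `z` is the minimum, over the finitely many integer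
parts `x_I` of bounded `X_MO`, of the bounding functions `c_I·x_I + z_LP(ζ + t • d - C_I x_I)`. The
pairs `(x_C, t)` feasible for such an LP form a polytope, which has finitely many vertices, so each
bounding function is affine or `+∞` for small `t > 0`. A finite minimum of such functions has a
right derivative at `0`: the least slope among the pieces active at `ζ`, or `+∞` if there are none.

Under (i), `z` strictly increases along the ray: otherwise an optimal solution at `ζ + t • d` is
dominated by an efficient one, which is then optimal at `ζ`, hence tight at `ζ`, yet lies strictly
below `ζ` where `d < 0`. So that least slope is positive. Conversely, an optimal efficient point `x`
with `Cx ≤ ζ`, `Cx ≠ ζ` keeps `z` constant on the segment from `ζ` to `Cx`, so the derivative in the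
direction `Cx - ζ` vanishes.
-/

def polyhedron {V W ι : Type*} [AddCommGroup V] [Module ℝ V] [AddCommGroup W] [Module ℝ W]
    (f : ι → V →ₗ[ℝ] ℝ) (q : ι → ℝ) (g : V →ₗ[ℝ] W) (w : W) : Set V :=
  {x | (∀ i, f i x ≤ q i) ∧ g x = w}

section Polyhedron

variable {V W ι : Type*} [AddCommGroup V] [Module ℝ V] [AddCommGroup W] [Module ℝ W]
  {f : ι → V →ₗ[ℝ] ℝ} {q : ι → ℝ} {g : V →ₗ[ℝ] W} {w : W}

theorem convex_polyhedron : Convex ℝ (polyhedron f q g w) := by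
  rintro x ⟨hxf, hxg⟩ y ⟨hyf, hyg⟩ a b ha hb hab
  refine ⟨fun i => ?_, ?_⟩
  · simpa using (convex_halfSpace_le (f i).isLinear (q i)) (hxf i) (hyf i) ha hb hab
  · rw [map_add, map_smul, map_smul, hxg, hyg, ← add_smul, hab, one_smul]

theorem isClosed_polyhedron [TopologicalSpace V] [IsTopologicalAddGroup V] [ContinuousSMul ℝ V]
    [T2Space V] [FiniteDimensional ℝ V] [TopologicalSpace W] [IsTopologicalAddGroup W]
    [ContinuousSMul ℝ W] [T2Space W] : IsClosed (polyhedron f q g w) := by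
  rw [polyhedron, ofPred_and, ofPred_forall]
  exact (isClosed_iInter fun i =>
    isClosed_le (f i).continuous_of_finiteDimensional continuous_const).inter
      (isClosed_eq g.continuous_of_finiteDimensional continuous_const)

theorem eq_zero_of_mem_extremePoints_of_eventually_mem {A : Set V} {x v : V}
    (hx : x ∈ extremePoints ℝ A) (h : ∀ᶠ c in 𝓝 (0 : ℝ), x + c • v ∈ A) : v = 0 := by
  have hneg : ∀ᶠ c in 𝓝 (0 : ℝ), x + (-c) • v ∈ A :=
    (continuous_neg.tendsto' (0 : ℝ) 0 neg_zero).eventually h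
  obtain ⟨c, ⟨hc₁, hc₂⟩, hc⟩ :=
    ((h.and hneg).filter_mono nhdsWithin_le_nhds |>.and self_mem_nhdsWithin).exists
      (f := 𝓝[>] (0 : ℝ))
  have hseg : x ∈ openSegment ℝ (x + c • v) (x + (-c) • v) :=
    ⟨1 / 2, 1 / 2, by norm_num, by norm_num, by norm_num, by module⟩
  have := ((mem_extremePoints.1 hx).2 _ hc₁ _ hc₂ hseg).1
  rw [add_eq_left, smul_eq_zero] at this
  exact this.resolve_left (ne_of_gt hc)

theorem eventually_add_smul_sub_mem_polyhedron [Finite ι] {x y : V} (hx : x ∈ polyhedron f q g w)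
    (hy : y ∈ polyhedron f q g w) (hxy : ∀ i, f i x = q i ↔ f i y = q i) :
    ∀ᶠ c in 𝓝 (0 : ℝ), x + c • (x - y) ∈ polyhedron f q g w := by
  have hf : ∀ i c, f i (x + c • (x - y)) = f i x + c * (f i x - f i y) := by simp
  refine Filter.Eventually.and (eventually_all.2 fun i => ?_) (.of_forall fun c => ?_)
  · rcases (hx.1 i).eq_or_lt with hxi | hxi
    · refine .of_forall fun c => ?_
      rw [hf, hxi, (hxy i).1 hxi]
      simp
    · refine (Filter.Tendsto.eventually_lt_const hxi ?_).mono fun c hc => by rw [hf]; exact hc.le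
      exact ((continuous_const.add (continuous_id.mul continuous_const)).tendsto' 0 _ (by simp))
  · simp [hx.2, hy.2]

theorem finite_extremePoints_polyhedron [Finite ι] :
    (extremePoints ℝ (polyhedron f q g w)).Finite := by
  refine Set.Finite.of_finite_image (f := fun x => {i | f i x = q i}) (Set.toFinite _)
    fun x hx y hy hxy => ?_
  exact sub_eq_zero.1 (eq_zero_of_mem_extremePoints_of_eventually_mem hx
    (eventually_add_smul_sub_mem_polyhedron hx.1 hy.1 fun i => Set.ext_iff.1 hxy i))

end Polyhedron

theorem convexHull_extremePoints_of_finite {V : Type*} [NormedAddCommGroup V] [NormedSpace ℝ V]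
    {K : Set V} (hK : IsCompact K) (hconv : Convex ℝ K) (hfin : (extremePoints ℝ K).Finite) :
    convexHull ℝ (extremePoints ℝ K) = K := by
  simpa [(hfin.isClosed_convexHull ℝ).closure_eq] using closure_convexHull_extremePoints hK hconv

theorem exists_affine_lowerEnvelope_convexHull {V : Type*} [AddCommGroup V] [Module ℝ V]
    {E : Set V} (hE : E.Finite) (φ τ : V →ₗ[ℝ] ℝ) (hτ : ∀ p ∈ convexHull ℝ E, 0 ≤ τ p)
    (h₀ : ∃ p ∈ convexHull ℝ E, τ p = 0) (h₁ : ∃ p ∈ convexHull ℝ E, 0 < τ p) :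
    ∃ δ > 0, ∃ g s : ℝ, (∀ p ∈ convexHull ℝ E, g + s * τ p ≤ φ p) ∧
      ∀ t ∈ Icc 0 δ, ∃ p ∈ convexHull ℝ E, τ p = t ∧ φ p = g + s * t := by
  have hτE : ∀ e ∈ E, 0 ≤ τ e := fun e he => hτ e (subset_convexHull ℝ E he)
  have hE₀ : (E ∩ {e | τ e = 0}).Nonempty := by
    by_contra! hne
    obtain ⟨p, hp, hp0⟩ := h₀
    have : convexHull ℝ E ⊆ {p | 0 < τ p} := convexHull_min (fun e he =>
      (hτE e he).lt_of_ne fun h => hne.subset ⟨he, h.symm⟩) (convex_halfSpace_gt τ.isLinear 0)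
    exact (this hp).ne' hp0
  have hEpos : (E ∩ {e | 0 < τ e}).Nonempty := by
    by_contra! hne
    obtain ⟨p, hp, hp0⟩ := h₁
    have : convexHull ℝ E ⊆ {p | τ p ≤ 0} := convexHull_min (fun e he =>
      show τ e ≤ 0 from not_lt.1 fun h => hne.subset ⟨he, h⟩) (convex_halfSpace_le τ.isLinear 0)
    exact (this hp).not_gt hp0
  -- `g` is the least value of `φ` at a vertex of level `0`, and `s` the least slope from there to a
  -- vertex of positive level. The bound `g + s * τ ≤ φ` holds at the vertices, hence on the hull,
  -- and is attained along the edge from `e₀` to `e₁`.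
  obtain ⟨e₀, ⟨he₀, he₀τ : τ e₀ = 0⟩, he₀min⟩ :=
    (E ∩ {e | τ e = 0}).exists_min_image φ (hE.inter_of_left _) hE₀
  set g := φ e₀
  obtain ⟨e₁, ⟨he₁, he₁τ : 0 < τ e₁⟩, he₁min⟩ :=
    (E ∩ {e | 0 < τ e}).exists_min_image (fun e => (φ e - g) / τ e) (hE.inter_of_left _) hEpos
  set s := (φ e₁ - g) / τ e₁
  have hlow : ∀ e ∈ E, g + s * τ e ≤ φ e := by
    intro e he
    rcases (hτE e he).eq_or_lt with h | h
    · rw [← h, mul_zero, add_zero]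
      exact he₀min e ⟨he, h.symm⟩
    · have := (le_div_iff₀ h).1 (he₁min e ⟨he, h⟩)
      linarith
  refine ⟨τ e₁, he₁τ, g, s, fun p hp => ?_, fun t ht => ?_⟩
  · have := convexHull_min (t := {p | (s • τ - φ) p ≤ -g})
      (fun e he => by
        simp only [mem_ofPred_eq, LinearMap.sub_apply, LinearMap.smul_apply, smul_eq_mul]
        linarith [hlow e he]) (convex_halfSpace_le (s • τ - φ).isLinear _) hp
    simp only [mem_ofPred_eq, LinearMap.sub_apply, LinearMap.smul_apply, smul_eq_mul] at this
    linarith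
  · set θ := t / τ e₁
    have hθ₀ : 0 ≤ θ := div_nonneg ht.1 he₁τ.le
    have hθ₁ : θ ≤ 1 := (div_le_one he₁τ).2 ht.2
    refine ⟨(1 - θ) • e₀ + θ • e₁, convex_convexHull ℝ E (subset_convexHull ℝ E he₀)
      (subset_convexHull ℝ E he₁) (by linarith) hθ₀ (by ring), ?_, ?_⟩
    · simp [he₀τ, θ, div_mul_cancel₀ _ he₁τ.ne']
    · simp only [map_add, map_smul, smul_eq_mul, s, θ]
      field_simp
      ring

namespace EReal

theorem coe_le_slope_of_le {t : ℝ} (ht : 0 < t) {z c : ℝ} {y : EReal}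
    (h : (z : EReal) + ↑(c * t) ≤ y) : (c : EReal) ≤ ((t⁻¹ : ℝ) : EReal) * (y - z) := by
  induction y using EReal.rec with
  | bot => exact absurd (le_bot_iff.1 h) (by rw [← EReal.coe_add]; exact EReal.coe_ne_bot _)
  | coe y =>
    rw [← EReal.coe_add, EReal.coe_le_coe_iff] at h
    rw [← EReal.coe_sub, ← EReal.coe_mul, EReal.coe_le_coe_iff, le_inv_mul_iff₀ ht]
    linarith
  | top => simp [EReal.coe_mul_top_of_pos (inv_pos.2 ht)]

theorem slope_le_coe_of_le {t : ℝ} (ht : 0 < t) {z c : ℝ} {y : EReal}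
    (h : y ≤ (z : EReal) + ↑(c * t)) : ((t⁻¹ : ℝ) : EReal) * (y - z) ≤ c := by
  induction y using EReal.rec with
  | bot => simp [EReal.coe_mul_bot_of_pos (inv_pos.2 ht)]
  | coe y =>
    rw [← EReal.coe_add, EReal.coe_le_coe_iff] at h
    rw [← EReal.coe_sub, ← EReal.coe_mul, EReal.coe_le_coe_iff, inv_mul_le_iff₀ ht]
    linarith
  | top => exact absurd (top_le_iff.1 h) (by rw [← EReal.coe_add]; exact EReal.coe_ne_top _)

theorem tendsto_add_coe_mul (x : EReal) (k : ℝ) :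
    Tendsto (fun t : ℝ => x + ↑(k * t)) (𝓝 0) (𝓝 x) := by
  have hadd : ContinuousAt (fun p : EReal × EReal => p.1 + p.2) (x, 0) :=
    EReal.continuousAt_add (Or.inr (by simp)) (Or.inr (by simp))
  have hcoe : Tendsto (fun t : ℝ => ((k * t : ℝ) : EReal)) (𝓝 0) (𝓝 0) := by
    have : Tendsto (fun t : ℝ => k * t) (𝓝 0) (𝓝 0) := by
      simpa using (continuous_const_mul k).tendsto 0
    simpa using EReal.tendsto_coe.2 this
  simpa only [Function.comp_def, add_zero] using
    hadd.tendsto.comp (tendsto_const_nhds.prodMk_nhds hcoe)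

theorem le_coe_add_sInf {c : ℝ} {m : EReal} {T : Set EReal}
    (h : ∀ y ∈ T, m ≤ (c : EReal) + y) : m ≤ (c : EReal) + sInf T := by
  have : m - c ≤ sInf T := le_sInf fun y hy => by
    rw [EReal.sub_le_iff_le_add (.inl (EReal.coe_ne_bot c)) (.inl (EReal.coe_ne_top c)), add_comm]
    exact h y hy
  rwa [EReal.sub_le_iff_le_add (.inl (EReal.coe_ne_bot c)) (.inl (EReal.coe_ne_top c)),
    add_comm] at this

end EReal

open EReal in
theorem tendsto_slope_finset_inf_affine {ι : Type*} (s : Finset ι) (a : ι → EReal) (k : ι → ℝ)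
    (z : ℝ) (ha : ∀ i ∈ s, (z : EReal) ≤ a i) :
    Tendsto (fun t : ℝ => ((t⁻¹ : ℝ) : EReal) * (s.inf (fun i => a i + ↑(k i * t)) - z))
      (𝓝[>] 0) (𝓝 ((s.filter fun i => a i = z).inf fun i => (k i : EReal))) := by
  rw [tendsto_order]
  refine ⟨fun c hc => ?_, fun c hc => ?_⟩
  · obtain ⟨c', hcc', hc'⟩ := EReal.lt_iff_exists_real_btwn.1 hc
    have hlow : ∀ i ∈ s, ∀ᶠ t in 𝓝[>] (0 : ℝ), (z : EReal) + ↑(c' * t) ≤ a i + ↑(k i * t) := by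
      intro i hi
      rcases (ha i hi).eq_or_lt with hai | hai
      · have hk : c' ≤ k i := EReal.coe_le_coe_iff.1
          (hc'.trans_le (Finset.inf_le (Finset.mem_filter.2 ⟨hi, hai.symm⟩))).le
        filter_upwards [self_mem_nhdsWithin] with t (ht : 0 < t)
        rw [← hai]
        gcongr
      · exact (((tendsto_add_coe_mul _ c').eventually_lt (tendsto_add_coe_mul _ (k i)) hai
          ).filter_mono nhdsWithin_le_nhds).mono fun _ h => h.le
    filter_upwards [(Filter.eventually_all_finset s).2 hlow, self_mem_nhdsWithin] with t ht ht0
    exact hcc'.trans_le (coe_le_slope_of_le ht0 (Finset.le_inf ht))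
  · obtain hA | hA := (s.filter fun i => a i = z).eq_empty_or_nonempty
    · simp [hA] at hc
    obtain ⟨j, hj, hjL⟩ := Finset.exists_mem_eq_inf _ hA fun i => (k i : EReal)
    obtain ⟨hjs, hja⟩ := Finset.mem_filter.1 hj
    filter_upwards [self_mem_nhdsWithin] with t (ht : 0 < t)
    refine lt_of_le_of_lt (slope_le_coe_of_le ht ?_) (hjL ▸ hc)
    exact hja ▸ Finset.inf_le hjs

theorem pos_finset_inf_slope_of_eventually_lt {ι : Type*} (s : Finset ι) (a : ι → EReal)
    (k : ι → ℝ) (z : ℝ)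
    (hlt : ∀ᶠ t in 𝓝[>] (0 : ℝ), (z : EReal) < s.inf fun i => a i + ↑(k i * t)) :
    0 < (s.filter fun i => a i = z).inf fun i => (k i : EReal) := by
  rw [Finset.lt_inf_iff EReal.zero_lt_top]
  intro i hi
  obtain ⟨his, hia⟩ := Finset.mem_filter.1 hi
  obtain ⟨t, hzt, ht⟩ := (hlt.and self_mem_nhdsWithin).exists
  have := hzt.trans_le (Finset.inf_le (f := fun i => a i + ↑(k i * t)) his)
  rw [hia, ← EReal.coe_add, EReal.coe_lt_coe_iff, lt_add_iff_pos_right] at this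
  exact EReal.coe_pos.2 (pos_of_mul_pos_left this (le_of_lt ht))

def rayPolytope {l m nc : ℕ} (CC : Matrix (Fin l) (Fin nc) ℝ) (AC : Matrix (Fin m) (Fin nc) ℝ)
    (γ : Fin l → ℝ) (β : Fin m → ℝ) (d : Fin l → ℝ) (T : ℝ) : Set ((Fin nc → ℝ) × ℝ) :=
  {p | LPfeas CC AC (γ + p.2 • d) β p.1 ∧ p.2 ∈ Icc 0 T}

section LinearProgram

variable {l m nc : ℕ} {cC : Fin nc → ℝ} {CC : Matrix (Fin l) (Fin nc) ℝ}
  {AC : Matrix (Fin m) (Fin nc) ℝ} {γ : Fin l → ℝ} {β : Fin m → ℝ}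

theorem LPfeas.mono {γ' : Fin l → ℝ} {x : Fin nc → ℝ} (hx : LPfeas CC AC γ β x) (h : γ ≤ γ') :
    LPfeas CC AC γ' β x :=
  ⟨hx.1, hx.2.1.trans h, hx.2.2⟩

theorem zLP_eq_top_s13 (h : ∀ x, ¬LPfeas CC AC γ β x) : zLP cC CC AC γ β = ⊤ := by
  rw [zLP, sInf_eq_top]
  rintro _ ⟨x, hx, -⟩
  exact absurd hx (h x)

theorem zLP_eq_coe {x : Fin nc → ℝ} (hx : LPfeas CC AC γ β x)
    (hmin : ∀ x', LPfeas CC AC γ β x' → cC ⬝ᵥ x ≤ cC ⬝ᵥ x') :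
    zLP cC CC AC γ β = (cC ⬝ᵥ x : ℝ) := by
  refine IsGLB.sInf_eq (IsLeast.isGLB ⟨⟨x, hx, rfl⟩, ?_⟩)
  rintro _ ⟨x', hx', rfl⟩
  exact EReal.coe_le_coe_iff.2 (hmin x' hx')

-- constraints `-x ≤ 0`, `CC x - t d ≤ γ`, `-t ≤ 0`, `t ≤ T`, and `AC x = β`
theorem rayPolytope_eq_polyhedron (d : Fin l → ℝ) (T : ℝ) :
    rayPolytope CC AC γ β d T = polyhedron
      (Sum.elim (fun j => -(LinearMap.proj j ∘ₗ LinearMap.fst ℝ _ ℝ))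
        (Sum.elim (fun i => LinearMap.proj i ∘ₗ CC.mulVecLin ∘ₗ LinearMap.fst ℝ _ ℝ -
            d i • LinearMap.snd ℝ _ ℝ)
          ![-LinearMap.snd ℝ _ ℝ, LinearMap.snd ℝ _ ℝ]))
      (Sum.elim 0 (Sum.elim γ ![0, T])) (AC.mulVecLin ∘ₗ LinearMap.fst ℝ _ ℝ) β := by
  ext ⟨x, t⟩
  simp [rayPolytope, polyhedron, LPfeas, Sum.forall, Fin.forall_fin_two, Pi.le_def, mul_comm,
    and_assoc, and_comm, and_left_comm]

theorem isCompact_rayPolytope (d : Fin l → ℝ) (T : ℝ)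
    (hbdd : Bornology.IsBounded {x : Fin nc → ℝ | (∀ j, 0 ≤ x j) ∧ AC *ᵥ x = β}) :
    IsCompact (rayPolytope CC AC γ β d T) :=
  Metric.isCompact_of_isClosed_isBounded (rayPolytope_eq_polyhedron d T ▸ isClosed_polyhedron)
    ((hbdd.prod (Metric.isBounded_Icc 0 T)).subset fun _ hp => ⟨⟨hp.1.1, hp.1.2.2⟩, hp.2⟩)

theorem finite_extremePoints_rayPolytope (d : Fin l → ℝ) (T : ℝ) :
    (extremePoints ℝ (rayPolytope CC AC γ β d T)).Finite :=
  rayPolytope_eq_polyhedron d T ▸ finite_extremePoints_polyhedron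

theorem convexHull_extremePoints_rayPolytope (d : Fin l → ℝ) (T : ℝ)
    (hbdd : Bornology.IsBounded {x : Fin nc → ℝ | (∀ j, 0 ≤ x j) ∧ AC *ᵥ x = β}) :
    convexHull ℝ (extremePoints ℝ (rayPolytope CC AC γ β d T)) = rayPolytope CC AC γ β d T :=
  convexHull_extremePoints_of_finite (isCompact_rayPolytope d T hbdd)
    (rayPolytope_eq_polyhedron d T ▸ convex_polyhedron) (finite_extremePoints_rayPolytope d T)

theorem exists_zLP_affine_of_feasible {d : Fin l → ℝ} (hd : d ≤ 0)
    (hbdd : Bornology.IsBounded {x : Fin nc → ℝ | (∀ j, 0 ≤ x j) ∧ AC *ᵥ x = β})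
    {T : ℝ} (hT : 0 < T) {x₀ : Fin nc → ℝ} (hx₀ : LPfeas CC AC (γ + T • d) β x₀) :
    ∃ δ > 0, ∃ g s : ℝ, ∀ t ∈ Icc 0 δ, zLP cC CC AC (γ + t • d) β = ↑(g + s * t) := by
  have hQ := convexHull_extremePoints_rayPolytope (CC := CC) (γ := γ) d T hbdd
  have hx₀0 : LPfeas CC AC (γ + (0 : ℝ) • d) β x₀ :=
    hx₀.mono (by simpa using smul_nonpos_of_nonneg_of_nonpos hT.le hd)
  obtain ⟨δ, hδ, g, s, hlow, hatt⟩ := exists_affine_lowerEnvelope_convexHull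
    (finite_extremePoints_rayPolytope d T) (dotProductBilin ℝ ℝ cC ∘ₗ LinearMap.fst ℝ _ ℝ)
    (LinearMap.snd ℝ _ ℝ) (by rw [hQ]; exact fun p hp => hp.2.1)
    (by rw [hQ]; exact ⟨(x₀, 0), ⟨hx₀0, le_rfl, hT.le⟩, rfl⟩)
    (by rw [hQ]; exact ⟨(x₀, T), ⟨hx₀, hT.le, le_rfl⟩, hT⟩)
  rw [hQ] at hlow hatt
  have hδT : δ ≤ T := by
    obtain ⟨p, hp, hpδ, -⟩ := hatt δ ⟨hδ.le, le_rfl⟩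
    exact hpδ ▸ hp.2.2
  refine ⟨δ, hδ, g, s, fun t ht => ?_⟩
  obtain ⟨⟨x, t⟩, hp, rfl, hpv⟩ := hatt t ht
  have hpv : cC ⬝ᵥ x = g + s * t := hpv
  change zLP cC CC AC (γ + t • d) β = ↑(g + s * t)
  rw [← hpv]
  exact zLP_eq_coe hp.1 fun x' hx' => hpv ▸ hlow (x', t) ⟨hx', ht.1, ht.2.trans hδT⟩

theorem zLP_ray_eventually_affine {d : Fin l → ℝ} (hd : d ≤ 0)
    (hbdd : Bornology.IsBounded {x : Fin nc → ℝ | (∀ j, 0 ≤ x j) ∧ AC *ᵥ x = β}) :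
    ∃ (a : EReal) (k : ℝ), zLP cC CC AC γ β ≤ a ∧
      ∀ᶠ t in 𝓝[>] (0 : ℝ), zLP cC CC AC (γ + t • d) β = a + ↑(k * t) := by
  by_cases hfeas : ∀ T : ℝ, 0 < T → ∀ x, ¬LPfeas CC AC (γ + T • d) β x
  · refine ⟨⊤, 0, le_top, eventually_mem_nhdsWithin.mono fun t ht => ?_⟩
    rw [zLP_eq_top_s13 (hfeas t ht), EReal.top_add_coe]
  push Not at hfeas
  obtain ⟨T, hT, x₀, hx₀⟩ := hfeas
  obtain ⟨δ, hδ, g, s, hval⟩ := exists_zLP_affine_of_feasible (cC := cC) hd hbdd hT hx₀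
  refine ⟨g, s, by simpa using (hval 0 ⟨le_rfl, hδ.le⟩).le, ?_⟩
  filter_upwards [Ioc_mem_nhdsGT hδ] with t ht
  rw [hval t ⟨ht.1.le, ht.2⟩, EReal.coe_add]

end LinearProgram

theorem IsCompact.exists_pareto_le {α β : Type*} [TopologicalSpace α] [TopologicalSpace β]
    [PartialOrder β] [ClosedIicTopology β] {K : Set α} (hK : IsCompact K) {F : α → β}
    (hF : Continuous F) {g : β → ℝ} (hg : Continuous g) (hgm : StrictMono g) {q : α}
    (hq : q ∈ K) : ∃ p ∈ K, F p ≤ F q ∧ ¬∃ p' ∈ K, F p' ≤ F p ∧ F p' ≠ F p := by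
  obtain ⟨p, ⟨hpK, hpq⟩, hmin⟩ := (hK.inter_right (isClosed_Iic.preimage hF)).exists_isMinOn
    ⟨q, hq, le_rfl⟩ (hg.comp hF).continuousOn
  refine ⟨p, hpK, hpq, fun ⟨p', hp'K, hle, hne⟩ => ?_⟩
  exact (hgm (lt_of_le_of_ne hle hne)).not_ge (hmin ⟨hp'K, hle.trans hpq⟩)

theorem strictMono_fst_add_sum {ι : Type*} [Fintype ι] :
    StrictMono fun x : ℝ × (ι → ℝ) => x.1 + ∑ i, x.2 i := by
  intro x y h
  rcases Prod.lt_iff.1 h with ⟨h₁, h₂⟩ | ⟨h₁, h₂⟩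
  · exact add_lt_add_of_lt_of_le h₁ (Finset.sum_le_sum fun i _ => h₂ i)
  · exact add_lt_add_of_le_of_lt h₁ (Fintype.sum_strictMono h₂)

section MixedIntegerProgram

variable {l m nc r : ℕ} {cI : Fin r → ℝ} {cC : Fin nc → ℝ} {AI : Matrix (Fin m) (Fin r) ℝ}
  {AC : Matrix (Fin m) (Fin nc) ℝ} {b : Fin m → ℝ} {CI : Matrix (Fin l) (Fin r) ℝ}
  {CC : Matrix (Fin l) (Fin nc) ℝ}

theorem isClosed_setOf_isNatVec : IsClosed {x : Fin r → ℝ | IsNatVec x} := by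
  simp only [IsNatVec, ofPred_forall]
  refine isClosed_iInter fun i => ?_
  simpa [Set.preimage, eq_comm] using
    Nat.isClosedEmbedding_coe_real.isClosed_range.preimage
      (continuous_apply (A := fun _ : Fin r => ℝ) i)

theorem isClosed_XMO : IsClosed (XMO AI AC b) :=
  (isClosed_setOf_isNatVec.preimage continuous_fst).inter
    ((isClosed_le continuous_const continuous_snd).inter
      (isClosed_eq (f := fun p : (Fin r → ℝ) × (Fin nc → ℝ) => AI *ᵥ p.1 + AC *ᵥ p.2)
        (by fun_prop) continuous_const))

theorem isCompact_XMO (hbdd : Bornology.IsBounded (XMO AI AC b)) : IsCompact (XMO AI AC b) :=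
  Metric.isCompact_of_isClosed_isBounded isClosed_XMO hbdd

theorem isCompact_Sreg (hbdd : Bornology.IsBounded (XMO AI AC b)) (ζ : Fin l → ℝ) :
    IsCompact (Sreg AI AC b CI CC ζ) :=
  (isCompact_XMO hbdd).inter_right
    (isClosed_le (f := fun p : (Fin r → ℝ) × (Fin nc → ℝ) => CI *ᵥ p.1 + CC *ᵥ p.2)
      (by fun_prop) continuous_const)

theorem finite_SI (hbdd : Bornology.IsBounded (XMO AI AC b)) : (SI AI AC b).Finite := by
  choose R hR using fun i => ((isCompact_XMO hbdd).image
    (continuous_apply i |>.comp continuous_fst)).isBounded.bddAbove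
  refine (Set.Finite.pi (t := fun i => ((↑) : ℕ → ℝ) '' Iic ⌈R i⌉₊)
    fun i => (finite_Iic _).image _).subset ?_
  rintro xI ⟨xC, hx⟩ i -
  obtain ⟨k, hk⟩ := hx.1 i
  have hkR : (k : ℝ) ≤ R i := hk ▸ hR i ⟨_, hx, rfl⟩
  exact ⟨k, Nat.cast_le.1 (hkR.trans (Nat.le_ceil _)), hk.symm⟩

theorem mem_Sreg_iff {ζ : Fin l → ℝ} {p : (Fin r → ℝ) × (Fin nc → ℝ)} :
    p ∈ Sreg AI AC b CI CC ζ ↔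
      IsNatVec p.1 ∧ LPfeas CC AC (ζ - CI *ᵥ p.1) (b - AI *ᵥ p.1) p.2 := by
  simp only [Sreg, XMO, LPfeas, mem_ofPred_eq, le_sub_iff_add_le', eq_sub_iff_add_eq']
  tauto

theorem zRVF_le {ζ : Fin l → ℝ} {p : (Fin r → ℝ) × (Fin nc → ℝ)}
    (hp : p ∈ Sreg AI AC b CI CC ζ) :
    zRVF cI cC AI AC b CI CC ζ ≤ ((cI ⬝ᵥ p.1 + cC ⬝ᵥ p.2 : ℝ) : EReal) :=
  sInf_le ⟨p, hp, rfl⟩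

theorem zRVF_eq_top {ζ : Fin l → ℝ} (h : ¬(Sreg AI AC b CI CC ζ).Nonempty) :
    zRVF cI cC AI AC b CI CC ζ = ⊤ := by
  rw [zRVF, sInf_eq_top]
  rintro _ ⟨p, hp, -⟩
  exact absurd ⟨p, hp⟩ h

theorem zRVF_eq_of_isMinOn {ζ : Fin l → ℝ} {p : (Fin r → ℝ) × (Fin nc → ℝ)}
    (hp : p ∈ Sreg AI AC b CI CC ζ)
    (hmin : IsMinOn (fun q : (Fin r → ℝ) × (Fin nc → ℝ) => cI ⬝ᵥ q.1 + cC ⬝ᵥ q.2)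
      (Sreg AI AC b CI CC ζ) p) :
    zRVF cI cC AI AC b CI CC ζ = ((cI ⬝ᵥ p.1 + cC ⬝ᵥ p.2 : ℝ) : EReal) := by
  refine IsGLB.sInf_eq (IsLeast.isGLB ⟨⟨p, hp, rfl⟩, ?_⟩)
  rintro _ ⟨q, hq, rfl⟩
  exact EReal.coe_le_coe_iff.2 (hmin hq)

theorem exists_isMinOn_Sreg (hbdd : Bornology.IsBounded (XMO AI AC b)) {ζ : Fin l → ℝ}
    (hζ : (Sreg AI AC b CI CC ζ).Nonempty) :
    ∃ p ∈ Sreg AI AC b CI CC ζ,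
      IsMinOn (fun q : (Fin r → ℝ) × (Fin nc → ℝ) => cI ⬝ᵥ q.1 + cC ⬝ᵥ q.2)
        (Sreg AI AC b CI CC ζ) p :=
  (isCompact_Sreg hbdd ζ).exists_isMinOn hζ (by fun_prop)

theorem zRVF_antitone : Antitone (zRVF cI cC AI AC b CI CC) := by
  intro ζ₁ ζ₂ h
  apply sInf_le_sInf
  rintro _ ⟨p, hp, rfl⟩
  exact ⟨p, ⟨hp.1, hp.2.trans h⟩, rfl⟩

theorem zRVF_eq_iInf_zbar (ζ : Fin l → ℝ) :
    zRVF cI cC AI AC b CI CC ζ = ⨅ xI ∈ SI AI AC b, zbar cI cC AI AC b CI CC ζ xI := by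
  refine le_antisymm (le_iInf₂ fun xI ⟨_, hxI⟩ => ?_) (le_sInf ?_)
  · refine EReal.le_coe_add_sInf ?_
    rintro _ ⟨xC, hxC, rfl⟩
    rw [← EReal.coe_add]
    exact zRVF_le ((mem_Sreg_iff (p := (xI, xC))).2 ⟨hxI.1, hxC⟩)
  · rintro _ ⟨p, hp, rfl⟩
    refine (iInf₂_le p.1 (show p.1 ∈ SI AI AC b from ⟨p.2, hp.1⟩)).trans ?_
    rw [zbar, EReal.coe_add]
    gcongr
    exact sInf_le ⟨p.2, (mem_Sreg_iff.1 hp).2, rfl⟩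

theorem zbar_ray_eventually_affine (hbdd : Bornology.IsBounded (XMO AI AC b)) {xI : Fin r → ℝ}
    (hxI : xI ∈ SI AI AC b) {d : Fin l → ℝ} (hd : d ≤ 0) (ζ : Fin l → ℝ) :
    ∃ (a : EReal) (k : ℝ), zbar cI cC AI AC b CI CC ζ xI ≤ a ∧
      ∀ᶠ t in 𝓝[>] (0 : ℝ), zbar cI cC AI AC b CI CC (ζ + t • d) xI = a + ↑(k * t) := by
  obtain ⟨_, hxI⟩ := hxI
  have hLPbdd : Bornology.IsBounded {x : Fin nc → ℝ | (∀ j, 0 ≤ x j) ∧ AC *ᵥ x = b - AI *ᵥ xI} :=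
    ((isCompact_XMO hbdd).image continuous_snd).isBounded.subset fun x hx =>
      ⟨(xI, x), ⟨hxI.1, hx.1, eq_sub_iff_add_eq'.1 hx.2⟩, rfl⟩
  obtain ⟨a, k, ha, hk⟩ :=
    zLP_ray_eventually_affine (cC := cC) (CC := CC) (γ := ζ - CI *ᵥ xI) hd hLPbdd
  refine ⟨(cI ⬝ᵥ xI : ℝ) + a, k, add_le_add_right ha _, hk.mono fun t ht => ?_⟩
  rw [zbar, add_sub_right_comm, ht, add_assoc]

theorem zRVF_ray_eventually_finset_inf (hbdd : Bornology.IsBounded (XMO AI AC b))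
    {d : Fin l → ℝ} (hd : d ≤ 0) (ζ : Fin l → ℝ) :
    ∃ (s : Finset (Fin r → ℝ)) (a : (Fin r → ℝ) → EReal) (k : (Fin r → ℝ) → ℝ),
      (∀ xI ∈ s, zRVF cI cC AI AC b CI CC ζ ≤ a xI) ∧
      ∀ᶠ t in 𝓝[>] (0 : ℝ),
        zRVF cI cC AI AC b CI CC (ζ + t • d) = s.inf fun xI => a xI + ↑(k xI * t) := by
  have hfin := finite_SI hbdd
  choose! a k ha hk using fun xI (hxI : xI ∈ SI AI AC b) =>
    zbar_ray_eventually_affine (cI := cI) (cC := cC) (CI := CI) (CC := CC) hbdd hxI hd ζ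
  refine ⟨hfin.toFinset, a, k, fun xI hxI => ?_, ?_⟩
  · rw [Set.Finite.mem_toFinset] at hxI
    exact (zRVF_eq_iInf_zbar ζ ▸ iInf₂_le xI hxI).trans (ha xI hxI)
  · filter_upwards [(Filter.eventually_all_finset _).2 fun xI hxI =>
      hk xI (hfin.mem_toFinset.1 hxI)] with t ht
    rw [zRVF_eq_iInf_zbar, Finset.inf_eq_iInf]
    simp only [Set.Finite.mem_toFinset] at ht ⊢
    exact iInf_congr fun xI => iInf_congr (ht xI)

theorem exists_isEfficient_le (hbdd : Bornology.IsBounded (XMO AI AC b))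
    {q : (Fin r → ℝ) × (Fin nc → ℝ)} (hq : q ∈ XMO AI AC b) :
    ∃ p, IsEfficient cI cC AI AC b CI CC p ∧ CritVec cI cC CI CC p ≤ CritVec cI cC CI CC q := by
  obtain ⟨p, hp, hpq, hmin⟩ := (isCompact_XMO hbdd).exists_pareto_le
    (F := CritVec cI cC CI CC) (by unfold CritVec; fun_prop) (by fun_prop)
    strictMono_fst_add_sum hq
  exact ⟨p, ⟨hp, hmin⟩, hpq⟩

theorem zRVF_lt_of_forall_isEfficient_tight (hbdd : Bornology.IsBounded (XMO AI AC b))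
    {ζ : Fin l → ℝ} (hζ : ζ ∈ Cdom AI AC b CI CC)
    (htight : ∀ p : (Fin r → ℝ) × (Fin nc → ℝ), IsEfficient cI cC AI AC b CI CC p →
      ((cI ⬝ᵥ p.1 + cC ⬝ᵥ p.2 : ℝ) : EReal) = zRVF cI cC AI AC b CI CC ζ →
      CI *ᵥ p.1 + CC *ᵥ p.2 ≤ ζ → CI *ᵥ p.1 + CC *ᵥ p.2 = ζ)
    {d : Fin l → ℝ} (hd : d ≤ 0) (hd0 : d ≠ 0) {t : ℝ} (ht : 0 < t) :
    zRVF cI cC AI AC b CI CC ζ < zRVF cI cC AI AC b CI CC (ζ + t • d) := by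
  have hshift : ζ + t • d ≤ ζ :=
    add_le_of_nonpos_right (smul_nonpos_of_nonneg_of_nonpos ht.le hd)
  obtain ⟨p₀, hp₀, hmin₀⟩ := exists_isMinOn_Sreg hbdd hζ
  have hz := zRVF_eq_of_isMinOn hp₀ hmin₀
  rw [hz]
  by_contra! hle
  have hne : (Sreg AI AC b CI CC (ζ + t • d)).Nonempty := by
    by_contra h
    rw [zRVF_eq_top h, top_le_iff] at hle
    exact EReal.coe_ne_top _ hle
  obtain ⟨q, hq, hqmin⟩ := exists_isMinOn_Sreg hbdd hne
  rw [zRVF_eq_of_isMinOn hq hqmin, EReal.coe_le_coe_iff] at hle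
  obtain ⟨p, hp, hpq⟩ :=
    exists_isEfficient_le (cI := cI) (cC := cC) (CI := CI) (CC := CC) hbdd hq.1
  have hpS : p ∈ Sreg AI AC b CI CC ζ := ⟨hp.1, hpq.2.trans (hq.2.trans hshift)⟩
  have hpval : cI ⬝ᵥ p.1 + cC ⬝ᵥ p.2 = cI ⬝ᵥ p₀.1 + cC ⬝ᵥ p₀.2 :=
    le_antisymm (hpq.1.trans hle) (hmin₀ hpS)
  have hCp := htight p hp (by rw [hz, hpval]) hpS.2
  obtain ⟨i, hi⟩ := Function.ne_iff.1 hd0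
  have hlt : (CI *ᵥ p.1 + CC *ᵥ p.2) i ≤ (ζ + t • d) i := (hpq.2.trans hq.2) i
  rw [hCp] at hlt
  simp only [Pi.add_apply, Pi.smul_apply, smul_eq_mul] at hlt
  have hdi : d i < 0 := lt_of_le_of_ne (hd i) hi
  linarith [mul_neg_of_pos_of_neg ht hdi]

theorem hasDirDeriv_zRVF_zero_of_optimal {ζ : Fin l → ℝ} {p : (Fin r → ℝ) × (Fin nc → ℝ)}
    (hp : p ∈ XMO AI AC b)
    (hpz : ((cI ⬝ᵥ p.1 + cC ⬝ᵥ p.2 : ℝ) : EReal) = zRVF cI cC AI AC b CI CC ζ)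
    (hpζ : CI *ᵥ p.1 + CC *ᵥ p.2 ≤ ζ) :
    HasDirDeriv (zRVF cI cC AI AC b CI CC) ζ (CI *ᵥ p.1 + CC *ᵥ p.2 - ζ) 0 := by
  have hconst : ∀ t ∈ Ioo (0 : ℝ) 1,
      zRVF cI cC AI AC b CI CC (ζ + t • (CI *ᵥ p.1 + CC *ᵥ p.2 - ζ)) =
        zRVF cI cC AI AC b CI CC ζ := by
    intro t ht
    refine le_antisymm (hpz ▸ zRVF_le ⟨hp, fun i => ?_⟩) (zRVF_antitone fun i => ?_) <;>
    · have hi : (CI *ᵥ p.1 + CC *ᵥ p.2) i ≤ ζ i := hpζ i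
      simp only [Pi.add_apply, Pi.smul_apply, Pi.sub_apply, smul_eq_mul] at hi ⊢
      nlinarith [mul_nonneg ht.1.le (sub_nonneg.2 hi),
        mul_nonneg (sub_nonneg.2 ht.2.le) (sub_nonneg.2 hi)]
  refine tendsto_const_nhds.congr' ?_
  filter_upwards [Ioo_mem_nhdsGT one_pos] with t ht
  rw [hconst t ht, ← hpz, ← EReal.coe_sub, sub_self, ← EReal.coe_mul, mul_zero, EReal.coe_zero]

end MixedIntegerProgram

theorem stmt_13_general {l m nc r : ℕ} (cI : Fin r → ℝ) (cC : Fin nc → ℝ) (AI : Matrix (Fin m) (Fin r) ℝ)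
    (AC : Matrix (Fin m) (Fin nc) ℝ) (b : Fin m → ℝ) (CI : Matrix (Fin l) (Fin r) ℝ)
    (CC : Matrix (Fin l) (Fin nc) ℝ)
    (hbdd : Bornology.IsBounded (XMO AI AC b))
    (ζ : Fin l → ℝ) (hζ : ζ ∈ Cdom AI AC b CI CC) :
    (∀ p : (Fin r → ℝ) × (Fin nc → ℝ), IsEfficient cI cC AI AC b CI CC p →
        ((cI ⬝ᵥ p.1 + cC ⬝ᵥ p.2 : ℝ) : EReal) = zRVF cI cC AI AC b CI CC ζ →
        CI.mulVec p.1 + CC.mulVec p.2 ≤ ζ →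
        CI.mulVec p.1 + CC.mulVec p.2 = ζ)
    ↔ (∀ d : Fin l → ℝ, d ≤ 0 → d ≠ 0 →
        ∃ L : EReal, HasDirDeriv (zRVF cI cC AI AC b CI CC) ζ d L ∧ 0 < L) := by
  constructor
  · intro htight d hd hd0
    obtain ⟨p, hp, hmin⟩ := exists_isMinOn_Sreg hbdd hζ
    have hz := zRVF_eq_of_isMinOn hp hmin
    obtain ⟨s, a, k, ha, hs⟩ := zRVF_ray_eventually_finset_inf (cI := cI) (cC := cC) hbdd hd ζ
    rw [hz] at ha
    have hlt : ∀ᶠ t in 𝓝[>] (0 : ℝ),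
        ((cI ⬝ᵥ p.1 + cC ⬝ᵥ p.2 : ℝ) : EReal) < s.inf fun xI => a xI + ↑(k xI * t) := by
      filter_upwards [hs, self_mem_nhdsWithin] with t hst ht
      rw [← hst, ← hz]
      exact zRVF_lt_of_forall_isEfficient_tight hbdd hζ htight hd hd0 ht
    refine ⟨_, ?_, pos_finset_inf_slope_of_eventually_lt s a k _ hlt⟩
    rw [HasDirDeriv, hz]
    exact (tendsto_slope_finset_inf_affine s a k _ ha).congr'
      (hs.mono fun t ht => by simp only [ht])
  · intro hslope p hp hpz hpζ
    by_contra hne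
    obtain ⟨L, hL, hLpos⟩ := hslope _ (sub_nonpos.2 hpζ) (sub_ne_zero.2 hne)
    exact hLpos.ne' (tendsto_nhds_unique hL (hasDirDeriv_zRVF_zero_of_optimal hp.1 hpz hpζ))

theorem stmt_13 {l m nc r : ℕ} (cI : Fin r → ℝ) (cC : Fin nc → ℝ) (AI : Matrix (Fin m) (Fin r) ℝ)
    (AC : Matrix (Fin m) (Fin nc) ℝ) (b : Fin m → ℝ) (CI : Matrix (Fin l) (Fin r) ℝ)
    (CC : Matrix (Fin l) (Fin nc) ℝ)
    (hne : (XMO AI AC b).Nonempty) (hbdd : Bornology.IsBounded (XMO AI AC b))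
    (ζ : Fin l → ℝ) (hζ : ζ ∈ Cdom AI AC b CI CC) :
    (∀ p : (Fin r → ℝ) × (Fin nc → ℝ), IsEfficient cI cC AI AC b CI CC p →
        ((cI ⬝ᵥ p.1 + cC ⬝ᵥ p.2 : ℝ) : EReal) = zRVF cI cC AI AC b CI CC ζ →
        CI.mulVec p.1 + CC.mulVec p.2 ≤ ζ →
        CI.mulVec p.1 + CC.mulVec p.2 = ζ)
    ↔ (∀ d : Fin l → ℝ, d ≤ 0 → d ≠ 0 →
        ∃ L : EReal, HasDirDeriv (zRVF cI cC AI AC b CI CC) ζ d L ∧ 0 < L) :=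
  stmt_13_general cI cC AI AC b CI CC hbdd ζ hζ
end
end

section
/- Suppose (x*_I, x*_C) ∈ X_MO maximizes z̄ᵏ(C_I^{1:ℓ} x_I + C_C^{1:ℓ} x_C) − (c⁰_I·x_I + c⁰_C·x_C) over X_MO, and let θ denote this maximal value. Then θ = sup_{ζ ∈ 𝒞} ( z̄ᵏ(ζ) − z(ζ) ), and this supremum is attained at ζ* = C_I^{1:ℓ} x*_I + C_C^{1:ℓ} x*_C. -/
open Matrix Filter Topology Set

noncomputable section

section Helpers

variable {l m nc r : ℕ}

lemma zLP_anti (cC : Fin nc → ℝ) (CC : Matrix (Fin l) (Fin nc) ℝ)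
    (AC : Matrix (Fin m) (Fin nc) ℝ) (β : Fin m → ℝ) {ζ₁ ζ₂ : Fin l → ℝ} (h : ζ₁ ≤ ζ₂) :
    zLP cC CC AC ζ₂ β ≤ zLP cC CC AC ζ₁ β := by
  apply sInf_le_sInf
  rintro y ⟨x, ⟨hx0, hxC, hxA⟩, rfl⟩
  exact ⟨x, ⟨hx0, hxC.trans h, hxA⟩, rfl⟩

lemma zbar_anti (cI : Fin r → ℝ) (cC : Fin nc → ℝ) (AI : Matrix (Fin m) (Fin r) ℝ)
    (AC : Matrix (Fin m) (Fin nc) ℝ) (b : Fin m → ℝ) (CI : Matrix (Fin l) (Fin r) ℝ)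
    (CC : Matrix (Fin l) (Fin nc) ℝ) (xI : Fin r → ℝ) {ζ₁ ζ₂ : Fin l → ℝ} (h : ζ₁ ≤ ζ₂) :
    zbar cI cC AI AC b CI CC ζ₂ xI ≤ zbar cI cC AI AC b CI CC ζ₁ xI := by
  unfold zbar
  refine add_le_add le_rfl (zLP_anti _ _ _ _ ?_)
  intro i
  exact sub_le_sub_right (h i) _

lemma zbark_anti (cI : Fin r → ℝ) (cC : Fin nc → ℝ) (AI : Matrix (Fin m) (Fin r) ℝ)
    (AC : Matrix (Fin m) (Fin nc) ℝ) (b : Fin m → ℝ) (CI : Matrix (Fin l) (Fin r) ℝ)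
    (CC : Matrix (Fin l) (Fin nc) ℝ) (Sk : Set (Fin r → ℝ)) (U : ℝ)
    {ζ₁ ζ₂ : Fin l → ℝ} (h : ζ₁ ≤ ζ₂) :
    zbark cI cC AI AC b CI CC Sk U ζ₂ ≤ zbark cI cC AI AC b CI CC Sk U ζ₁ := by
  unfold zbark
  refine min_le_min ?_ le_rfl
  apply le_sInf
  rintro y ⟨xI, hxI, rfl⟩
  exact sInf_le_of_le ⟨xI, hxI, rfl⟩ (zbar_anti cI cC AI AC b CI CC xI h)

lemma zbark_real (cI : Fin r → ℝ) (cC : Fin nc → ℝ) (AI : Matrix (Fin m) (Fin r) ℝ)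
    (AC : Matrix (Fin m) (Fin nc) ℝ) (b : Fin m → ℝ) (CI : Matrix (Fin l) (Fin r) ℝ)
    (CC : Matrix (Fin l) (Fin nc) ℝ) (Sk : Set (Fin r → ℝ)) (hSkfin : Sk.Finite) (U : ℝ)
    (hbot : ∀ (ζ : Fin l → ℝ) (β : Fin m → ℝ), zLP cC CC AC ζ β ≠ ⊥) (ζ : Fin l → ℝ) :
    ∃ w : ℝ, zbark cI cC AI AC b CI CC Sk U ζ = (w : EReal) ∧ w ≤ U := by
  set T : Set EReal := {y | ∃ xI ∈ Sk, y = zbar cI cC AI AC b CI CC ζ xI} with hT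
  have hTfin : T.Finite := by
    have hsub : T ⊆ (fun xI => zbar cI cC AI AC b CI CC ζ xI) '' Sk := by
      rintro y ⟨xI, hxI, rfl⟩; exact ⟨xI, hxI, rfl⟩
    exact (hSkfin.image _).subset hsub
  have hbotT : ∀ y ∈ T, y ≠ ⊥ := by
    rintro y ⟨xI, hxI, rfl⟩
    simp only [zbar, ne_eq, EReal.add_eq_bot_iff]
    push_neg
    exact ⟨EReal.coe_ne_bot _, hbot _ _⟩
  have hInf : sInf T ≠ ⊥ := by
    rcases T.eq_empty_or_nonempty with hE | hNE
    · rw [hE, sInf_empty]; exact top_ne_bot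
    · exact hbotT _ (hNE.csInf_mem hTfin)
  have hU' : zbark cI cC AI AC b CI CC Sk U ζ ≤ (U : EReal) := min_le_right _ _
  have hne_top : zbark cI cC AI AC b CI CC Sk U ζ ≠ ⊤ :=
    (hU'.trans_lt (EReal.coe_lt_top U)).ne
  have hne_bot : zbark cI cC AI AC b CI CC Sk U ζ ≠ ⊥ := by
    have : (⊥ : EReal) < min (sInf T) (U : EReal) :=
      lt_min (Ne.bot_lt hInf) (Ne.bot_lt (EReal.coe_ne_bot U))
    exact this.ne'
  refine ⟨(zbark cI cC AI AC b CI CC Sk U ζ).toReal, (EReal.coe_toReal hne_top hne_bot).symm, ?_⟩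
  rw [← EReal.coe_le_coe_iff, EReal.coe_toReal hne_top hne_bot]
  exact hU'

end Helpers

theorem stmt_15 {l m nc r : ℕ} (cI : Fin r → ℝ) (cC : Fin nc → ℝ) (AI : Matrix (Fin m) (Fin r) ℝ)
    (AC : Matrix (Fin m) (Fin nc) ℝ) (b : Fin m → ℝ) (CI : Matrix (Fin l) (Fin r) ℝ)
    (CC : Matrix (Fin l) (Fin nc) ℝ)
    (hne : (XMO AI AC b).Nonempty) (hbdd : Bornology.IsBounded (XMO AI AC b))
    (hbot : ∀ (ζ : Fin l → ℝ) (β : Fin m → ℝ), zLP cC CC AC ζ β ≠ ⊥)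
    (Sk : Set (Fin r → ℝ)) (hSk : Sk ⊆ SI AI AC b) (hSkfin : Sk.Finite)
    (U : ℝ) (hU : ∀ ζ ∈ Cdom AI AC b CI CC, zRVF cI cC AI AC b CI CC ζ ≤ (U : EReal))
    (xs : (Fin r → ℝ) × (Fin nc → ℝ)) (hxs : xs ∈ XMO AI AC b)
    (hmax : ∀ p ∈ XMO AI AC b,
      zbark cI cC AI AC b CI CC Sk U (CI.mulVec p.1 + CC.mulVec p.2) - ((cI ⬝ᵥ p.1 + cC ⬝ᵥ p.2 : ℝ) : EReal) ≤
        zbark cI cC AI AC b CI CC Sk U (CI.mulVec xs.1 + CC.mulVec xs.2) - ((cI ⬝ᵥ xs.1 + cC ⬝ᵥ xs.2 : ℝ) : EReal)) :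
    (zbark cI cC AI AC b CI CC Sk U (CI.mulVec xs.1 + CC.mulVec xs.2) - ((cI ⬝ᵥ xs.1 + cC ⬝ᵥ xs.2 : ℝ) : EReal)
      = sSup {y : EReal | ∃ ζ ∈ Cdom AI AC b CI CC, y = zbark cI cC AI AC b CI CC Sk U ζ - zRVF cI cC AI AC b CI CC ζ}) ∧
    (zbark cI cC AI AC b CI CC Sk U (CI.mulVec xs.1 + CC.mulVec xs.2) - zRVF cI cC AI AC b CI CC (CI.mulVec xs.1 + CC.mulVec xs.2)
      = zbark cI cC AI AC b CI CC Sk U (CI.mulVec xs.1 + CC.mulVec xs.2) - ((cI ⬝ᵥ xs.1 + cC ⬝ᵥ xs.2 : ℝ) : EReal)) := by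
  set ζs : Fin l → ℝ := CI.mulVec xs.1 + CC.mulVec xs.2 with hζs
  set cs : ℝ := cI ⬝ᵥ xs.1 + cC ⬝ᵥ xs.2 with hcs
  obtain ⟨ws, hws, hwsU⟩ := zbark_real cI cC AI AC b CI CC Sk hSkfin U hbot ζs
  set θ : ℝ := ws - cs with hθ
  have hθe : zbark cI cC AI AC b CI CC Sk U ζs - ((cs : ℝ) : EReal) = ((θ : ℝ) : EReal) := by
    rw [hws, hθ, EReal.coe_sub]
  -- key bound: for feasible p in S(ζ), zbark ζ - c·p ≤ θ
  have key : ∀ ζ : Fin l → ℝ, ∀ p ∈ Sreg AI AC b CI CC ζ,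
      zbark cI cC AI AC b CI CC Sk U ζ - ((cI ⬝ᵥ p.1 + cC ⬝ᵥ p.2 : ℝ) : EReal) ≤ (θ : EReal) := by
    intro ζ p hp
    obtain ⟨hpX, hpC⟩ := hp
    have h1 : zbark cI cC AI AC b CI CC Sk U ζ ≤
        zbark cI cC AI AC b CI CC Sk U (CI.mulVec p.1 + CC.mulVec p.2) :=
      zbark_anti cI cC AI AC b CI CC Sk U hpC
    calc zbark cI cC AI AC b CI CC Sk U ζ - ((cI ⬝ᵥ p.1 + cC ⬝ᵥ p.2 : ℝ) : EReal)
        ≤ zbark cI cC AI AC b CI CC Sk U (CI.mulVec p.1 + CC.mulVec p.2)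
            - ((cI ⬝ᵥ p.1 + cC ⬝ᵥ p.2 : ℝ) : EReal) := EReal.sub_le_sub h1 le_rfl
      _ ≤ zbark cI cC AI AC b CI CC Sk U ζs - ((cs : ℝ) : EReal) := hmax p hpX
      _ = ((θ : ℝ) : EReal) := hθe
  -- the value function is bounded below by w - θ on Cdom
  have hlow : ∀ ζ : Fin l → ℝ, ∀ w : ℝ, zbark cI cC AI AC b CI CC Sk U ζ = (w : EReal) →
      (((w - θ : ℝ)) : EReal) ≤ zRVF cI cC AI AC b CI CC ζ := by
    intro ζ w hw
    apply le_sInf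
    rintro y ⟨p, hp, rfl⟩
    have hk := key ζ p hp
    rw [hw, ← EReal.coe_sub, EReal.coe_le_coe_iff] at hk
    exact EReal.coe_le_coe_iff.2 (by linarith)
  have hxs_mem : xs ∈ Sreg AI AC b CI CC ζs := ⟨hxs, le_of_eq hζs.symm⟩
  have hζs_mem : ζs ∈ Cdom AI AC b CI CC := ⟨xs, hxs_mem⟩
  have hz_up : zRVF cI cC AI AC b CI CC ζs ≤ ((cs : ℝ) : EReal) :=
    sInf_le ⟨xs, hxs_mem, rfl⟩
  have hz_low : ((cs : ℝ) : EReal) ≤ zRVF cI cC AI AC b CI CC ζs := by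
    have h := hlow ζs ws hws
    have heq : ((ws - θ : ℝ) : EReal) = ((cs : ℝ) : EReal) := by
      norm_num [hθ]
    rwa [heq] at h
  have hzRVFs : zRVF cI cC AI AC b CI CC ζs = ((cs : ℝ) : EReal) :=
    le_antisymm hz_up hz_low
  constructor
  · rw [hθe]
    apply le_antisymm
    · refine le_sSup ⟨ζs, hζs_mem, ?_⟩
      rw [hzRVFs, hθe]
    · apply sSup_le
      rintro y ⟨ζ, hζ, rfl⟩
      obtain ⟨w, hw, hwU⟩ := zbark_real cI cC AI AC b CI CC Sk hSkfin U hbot ζ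
      obtain ⟨p, hp⟩ := hζ
      have hub : zRVF cI cC AI AC b CI CC ζ ≤ ((cI ⬝ᵥ p.1 + cC ⬝ᵥ p.2 : ℝ) : EReal) :=
        sInf_le ⟨p, hp, rfl⟩
      have hlb := hlow ζ w hw
      have hne_top : zRVF cI cC AI AC b CI CC ζ ≠ ⊤ :=
        (hub.trans_lt (EReal.coe_lt_top _)).ne
      have hne_bot : zRVF cI cC AI AC b CI CC ζ ≠ ⊥ :=
        (lt_of_lt_of_le (Ne.bot_lt (EReal.coe_ne_bot _)) hlb).ne'
      set v : ℝ := (zRVF cI cC AI AC b CI CC ζ).toReal with hv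
      have hveq : zRVF cI cC AI AC b CI CC ζ = ((v : ℝ) : EReal) :=
        (EReal.coe_toReal hne_top hne_bot).symm
      rw [hveq] at hlb
      rw [EReal.coe_le_coe_iff] at hlb
      rw [hw, hveq, ← EReal.coe_sub, EReal.coe_le_coe_iff]
      linarith
  · rw [hzRVFs]
end
end

section
/- Suppose (x*_I, x*_C) ∈ X_MO maximizes z̄ᵏ(C_I^{1:ℓ} x_I + C_C^{1:ℓ} x_C) − (c⁰_I·x_I + c⁰_C·x_C) over X_MO, and suppose the optimal value θ = z̄ᵏ(C_I^{1:ℓ} x*_I + C_C^{1:ℓ} x*_C) − (c⁰_I·x*_I + c⁰_C·x*_C) is strictly positive. Then x*_I ∉ 𝒮ᵏ. -/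
open Matrix Filter Topology Set

noncomputable section

/-! If `x*_I ∈ Sᵏ`, then `x*_C` is feasible for the LP defining `z̄(ζ*; x*_I)` at `ζ* = C x*`, so
`z̄ᵏ(ζ*) ≤ z̄(ζ*; x*_I) ≤ c⁰ · x*` and the gap `θ` cannot be positive. -/

section

variable {l m nc r : ℕ} {cI : Fin r → ℝ} {cC : Fin nc → ℝ} {AI : Matrix (Fin m) (Fin r) ℝ}
  {AC : Matrix (Fin m) (Fin nc) ℝ} {b : Fin m → ℝ} {CI : Matrix (Fin l) (Fin r) ℝ}
  {CC : Matrix (Fin l) (Fin nc) ℝ}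

theorem zLP_le_of_LPfeas {ζ : Fin l → ℝ} {β : Fin m → ℝ} {x : Fin nc → ℝ}
    (hx : LPfeas CC AC ζ β x) : zLP cC CC AC ζ β ≤ ((cC ⬝ᵥ x : ℝ) : EReal) :=
  sInf_le ⟨x, hx, rfl⟩

theorem LPfeas_of_mem_Sreg {ζ : Fin l → ℝ} {p : (Fin r → ℝ) × (Fin nc → ℝ)}
    (hp : p ∈ Sreg AI AC b CI CC ζ) :
    LPfeas CC AC (ζ - CI *ᵥ p.1) (b - AI *ᵥ p.1) p.2 := by
  obtain ⟨⟨-, hxC, hA⟩, hC⟩ := hp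
  refine ⟨hxC, fun i => ?_, ?_⟩
  · simpa [le_sub_iff_add_le'] using hC i
  · rw [← hA, add_sub_cancel_left]

theorem zbar_le_of_mem_Sreg {ζ : Fin l → ℝ} {p : (Fin r → ℝ) × (Fin nc → ℝ)}
    (hp : p ∈ Sreg AI AC b CI CC ζ) :
    zbar cI cC AI AC b CI CC ζ p.1 ≤ ((cI ⬝ᵥ p.1 + cC ⬝ᵥ p.2 : ℝ) : EReal) := by
  rw [EReal.coe_add]
  exact add_le_add_right (zLP_le_of_LPfeas (LPfeas_of_mem_Sreg hp)) _

theorem mem_Sreg_self {p : (Fin r → ℝ) × (Fin nc → ℝ)} (hp : p ∈ XMO AI AC b) :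
    p ∈ Sreg AI AC b CI CC (CI *ᵥ p.1 + CC *ᵥ p.2) :=
  ⟨hp, le_rfl⟩

theorem zbark_le_zbar {Sk : Set (Fin r → ℝ)} {xI : Fin r → ℝ} (hxI : xI ∈ Sk) (U : ℝ)
    (ζ : Fin l → ℝ) :
    zbark cI cC AI AC b CI CC Sk U ζ ≤ zbar cI cC AI AC b CI CC ζ xI :=
  (min_le_left _ _).trans (sInf_le ⟨xI, hxI, rfl⟩)

theorem zbark_le_of_mem_XMO {Sk : Set (Fin r → ℝ)} (U : ℝ) {p : (Fin r → ℝ) × (Fin nc → ℝ)}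
    (hp : p ∈ XMO AI AC b) (hSk : p.1 ∈ Sk) :
    zbark cI cC AI AC b CI CC Sk U (CI *ᵥ p.1 + CC *ᵥ p.2) ≤
      ((cI ⬝ᵥ p.1 + cC ⬝ᵥ p.2 : ℝ) : EReal) :=
  (zbark_le_zbar hSk U _).trans (zbar_le_of_mem_Sreg (mem_Sreg_self hp))

end

theorem stmt_16_general {l m nc r : ℕ} (cI : Fin r → ℝ) (cC : Fin nc → ℝ) (AI : Matrix (Fin m) (Fin r) ℝ)
    (AC : Matrix (Fin m) (Fin nc) ℝ) (b : Fin m → ℝ) (CI : Matrix (Fin l) (Fin r) ℝ)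
    (CC : Matrix (Fin l) (Fin nc) ℝ)
    (Sk : Set (Fin r → ℝ))
    (U : ℝ)
    (xs : (Fin r → ℝ) × (Fin nc → ℝ)) (hxs : xs ∈ XMO AI AC b)
    (hpos : (0 : EReal) < zbark cI cC AI AC b CI CC Sk U (CI.mulVec xs.1 + CC.mulVec xs.2) - ((cI ⬝ᵥ xs.1 + cC ⬝ᵥ xs.2 : ℝ) : EReal)) :
    xs.1 ∉ Sk := by
  intro hmem
  exact (EReal.sub_nonpos.mpr (zbark_le_of_mem_XMO U hxs hmem)).not_gt hpos

theorem stmt_16 {l m nc r : ℕ} (cI : Fin r → ℝ) (cC : Fin nc → ℝ) (AI : Matrix (Fin m) (Fin r) ℝ)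
    (AC : Matrix (Fin m) (Fin nc) ℝ) (b : Fin m → ℝ) (CI : Matrix (Fin l) (Fin r) ℝ)
    (CC : Matrix (Fin l) (Fin nc) ℝ)
    (hne : (XMO AI AC b).Nonempty) (hbdd : Bornology.IsBounded (XMO AI AC b))
    (hbot : ∀ (ζ : Fin l → ℝ) (β : Fin m → ℝ), zLP cC CC AC ζ β ≠ ⊥)
    (Sk : Set (Fin r → ℝ)) (hSk : Sk ⊆ SI AI AC b) (hSkfin : Sk.Finite)
    (U : ℝ) (hU : ∀ ζ ∈ Cdom AI AC b CI CC, zRVF cI cC AI AC b CI CC ζ ≤ (U : EReal))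
    (xs : (Fin r → ℝ) × (Fin nc → ℝ)) (hxs : xs ∈ XMO AI AC b)
    (hmax : ∀ p ∈ XMO AI AC b,
      zbark cI cC AI AC b CI CC Sk U (CI.mulVec p.1 + CC.mulVec p.2) - ((cI ⬝ᵥ p.1 + cC ⬝ᵥ p.2 : ℝ) : EReal) ≤
        zbark cI cC AI AC b CI CC Sk U (CI.mulVec xs.1 + CC.mulVec xs.2) - ((cI ⬝ᵥ xs.1 + cC ⬝ᵥ xs.2 : ℝ) : EReal))
    (hpos : (0 : EReal) < zbark cI cC AI AC b CI CC Sk U (CI.mulVec xs.1 + CC.mulVec xs.2) - ((cI ⬝ᵥ xs.1 + cC ⬝ᵥ xs.2 : ℝ) : EReal)) :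
    xs.1 ∉ Sk :=
  stmt_16_general cI cC AI AC b CI CC Sk U xs hxs hpos
end
end

section
/- Suppose (x*_I, x*_C) ∈ X_MO maximizes z̄ᵏ(C_I^{1:ℓ} x_I + C_C^{1:ℓ} x_C) − (c⁰_I·x_I + c⁰_C·x_C) over X_MO. Then z(ζ*) = c⁰_I·x*_I + c⁰_C·x*_C, where ζ* = C_I^{1:ℓ} x*_I + C_C^{1:ℓ} x*_C; that is, the maximizer attains the true value of the restricted value function at its own criterion vector. -/
open Matrix Filter Topology Set

noncomputable section

/-! Every point `p` of `S(ζ*)` has `C p ≤ ζ*`, so `z̄ᵏ(C p) ≥ z̄ᵏ(ζ*)` because `z̄ᵏ` is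
nonincreasing. Maximality of `x*` then gives `z̄ᵏ(ζ*) - c p ≤ z̄ᵏ(ζ*) - c x*`, and since
`z̄ᵏ(ζ*)` is finite (at most `U`, and a finite minimum of values `> -∞`) this cancels to
`c x* ≤ c p`. Thus `x*` is optimal in `S(ζ*)`. -/

theorem sInf_ne_bot_of_finite {α : Type*} [CompleteLinearOrder α] [Nontrivial α] {s : Set α}
    (hs : s.Finite) (hbot : ⊥ ∉ s) : sInf s ≠ ⊥ := by
  rcases s.eq_empty_or_nonempty with rfl | hne
  · simp
  · exact fun h => hbot (h ▸ hne.csInf_mem hs)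

theorem EReal.le_of_sub_le_sub_of_coe_le {w a a' : ℝ} {A : EReal} (hA : (w : EReal) ≤ A)
    (h : A - a ≤ (w : EReal) - a') : a' ≤ a := by
  have := (EReal.sub_le_sub hA le_rfl).trans h
  rw [← EReal.coe_sub, ← EReal.coe_sub, EReal.coe_le_coe_iff] at this
  linarith

section ValueFunctions

variable {l m nc r : ℕ} (cI : Fin r → ℝ) (cC : Fin nc → ℝ) (AI : Matrix (Fin m) (Fin r) ℝ)
  (AC : Matrix (Fin m) (Fin nc) ℝ) (b : Fin m → ℝ) (CI : Matrix (Fin l) (Fin r) ℝ)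
  (CC : Matrix (Fin l) (Fin nc) ℝ)

theorem zLP_antitone (β : Fin m → ℝ) : Antitone fun ζ => zLP cC CC AC ζ β := by
  intro ζ ζ' hζ
  apply sInf_le_sInf
  rintro y ⟨x, ⟨hx0, hxζ, hxβ⟩, rfl⟩
  exact ⟨x, ⟨hx0, hxζ.trans hζ, hxβ⟩, rfl⟩

theorem zbar_antitone (xI : Fin r → ℝ) :
    Antitone fun ζ => zbar cI cC AI AC b CI CC ζ xI :=
  fun _ _ hζ => add_le_add_right (zLP_antitone cC AC CC _ (sub_le_sub_right hζ _)) _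

theorem zbark_antitone (Sk : Set (Fin r → ℝ)) (U : ℝ) :
    Antitone (zbark cI cC AI AC b CI CC Sk U) := by
  intro ζ ζ' hζ
  refine min_le_min (le_sInf ?_) le_rfl
  rintro y ⟨xI, hxI, rfl⟩
  exact sInf_le_of_le ⟨xI, hxI, rfl⟩ (zbar_antitone cI cC AI AC b CI CC xI hζ)

theorem zbark_ne_top (Sk : Set (Fin r → ℝ)) (U : ℝ) (ζ : Fin l → ℝ) :
    zbark cI cC AI AC b CI CC Sk U ζ ≠ ⊤ :=
  ne_top_of_le_ne_top (EReal.coe_ne_top U) (min_le_right _ _)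

theorem zbark_ne_bot (hbot : ∀ (ζ : Fin l → ℝ) (β : Fin m → ℝ), zLP cC CC AC ζ β ≠ ⊥)
    {Sk : Set (Fin r → ℝ)} (hSk : Sk.Finite) (U : ℝ) (ζ : Fin l → ℝ) :
    zbark cI cC AI AC b CI CC Sk U ζ ≠ ⊥ := by
  have hfin : {y : EReal | ∃ xI ∈ Sk, y = zbar cI cC AI AC b CI CC ζ xI}.Finite :=
    (hSk.image fun xI => zbar cI cC AI AC b CI CC ζ xI).subset
      fun _ ⟨xI, hxI, hy⟩ => ⟨xI, hxI, hy.symm⟩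
  have hzbar : ⊥ ∉ {y : EReal | ∃ xI ∈ Sk, y = zbar cI cC AI AC b CI CC ζ xI} := by
    rintro ⟨xI, -, hxI⟩
    exact EReal.add_ne_bot_iff.mpr ⟨EReal.coe_ne_bot _, hbot _ _⟩ hxI.symm
  simp only [zbark, ne_eq, min_eq_bot, not_or]
  exact ⟨sInf_ne_bot_of_finite hfin hzbar, EReal.coe_ne_bot U⟩

theorem zRVF_eq_of_forall_le {ζ : Fin l → ℝ} {xs : (Fin r → ℝ) × (Fin nc → ℝ)}
    (hxs : xs ∈ Sreg AI AC b CI CC ζ)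
    (hle : ∀ p ∈ Sreg AI AC b CI CC ζ, cI ⬝ᵥ xs.1 + cC ⬝ᵥ xs.2 ≤ cI ⬝ᵥ p.1 + cC ⬝ᵥ p.2) :
    zRVF cI cC AI AC b CI CC ζ = ((cI ⬝ᵥ xs.1 + cC ⬝ᵥ xs.2 : ℝ) : EReal) :=
  IsLeast.csInf_eq ⟨⟨xs, hxs, rfl⟩, by
    rintro y ⟨p, hp, rfl⟩
    exact EReal.coe_le_coe_iff.mpr (hle p hp)⟩

end ValueFunctions

theorem stmt_17_general {l m nc r : ℕ} (cI : Fin r → ℝ) (cC : Fin nc → ℝ) (AI : Matrix (Fin m) (Fin r) ℝ)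
    (AC : Matrix (Fin m) (Fin nc) ℝ) (b : Fin m → ℝ) (CI : Matrix (Fin l) (Fin r) ℝ)
    (CC : Matrix (Fin l) (Fin nc) ℝ)
    (hbot : ∀ (ζ : Fin l → ℝ) (β : Fin m → ℝ), zLP cC CC AC ζ β ≠ ⊥)
    (Sk : Set (Fin r → ℝ)) (hSkfin : Sk.Finite)
    (U : ℝ)
    (xs : (Fin r → ℝ) × (Fin nc → ℝ)) (hxs : xs ∈ XMO AI AC b)
    (hmax : ∀ p ∈ XMO AI AC b,
      zbark cI cC AI AC b CI CC Sk U (CI.mulVec p.1 + CC.mulVec p.2) - ((cI ⬝ᵥ p.1 + cC ⬝ᵥ p.2 : ℝ) : EReal) ≤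
        zbark cI cC AI AC b CI CC Sk U (CI.mulVec xs.1 + CC.mulVec xs.2) - ((cI ⬝ᵥ xs.1 + cC ⬝ᵥ xs.2 : ℝ) : EReal)) :
    zRVF cI cC AI AC b CI CC (CI.mulVec xs.1 + CC.mulVec xs.2) = ((cI ⬝ᵥ xs.1 + cC ⬝ᵥ xs.2 : ℝ) : EReal) := by
  set ζs := CI.mulVec xs.1 + CC.mulVec xs.2
  obtain ⟨w, hw⟩ : ∃ w : ℝ, zbark cI cC AI AC b CI CC Sk U ζs = w :=
    ⟨_, (EReal.coe_toReal (zbark_ne_top cI cC AI AC b CI CC Sk U ζs)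
      (zbark_ne_bot cI cC AI AC b CI CC hbot hSkfin U ζs)).symm⟩
  refine zRVF_eq_of_forall_le cI cC AI AC b CI CC ⟨hxs, le_rfl⟩ fun p ⟨hpX, hpζ⟩ => ?_
  have hmono := zbark_antitone cI cC AI AC b CI CC Sk U hpζ
  rw [hw] at hmono
  exact EReal.le_of_sub_le_sub_of_coe_le hmono (hw ▸ hmax p hpX)

theorem stmt_17 {l m nc r : ℕ} (cI : Fin r → ℝ) (cC : Fin nc → ℝ) (AI : Matrix (Fin m) (Fin r) ℝ)
    (AC : Matrix (Fin m) (Fin nc) ℝ) (b : Fin m → ℝ) (CI : Matrix (Fin l) (Fin r) ℝ)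
    (CC : Matrix (Fin l) (Fin nc) ℝ)
    (hne : (XMO AI AC b).Nonempty) (hbdd : Bornology.IsBounded (XMO AI AC b))
    (hbot : ∀ (ζ : Fin l → ℝ) (β : Fin m → ℝ), zLP cC CC AC ζ β ≠ ⊥)
    (Sk : Set (Fin r → ℝ)) (hSk : Sk ⊆ SI AI AC b) (hSkfin : Sk.Finite)
    (U : ℝ) (hU : ∀ ζ ∈ Cdom AI AC b CI CC, zRVF cI cC AI AC b CI CC ζ ≤ (U : EReal))
    (xs : (Fin r → ℝ) × (Fin nc → ℝ)) (hxs : xs ∈ XMO AI AC b)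
    (hmax : ∀ p ∈ XMO AI AC b,
      zbark cI cC AI AC b CI CC Sk U (CI.mulVec p.1 + CC.mulVec p.2) - ((cI ⬝ᵥ p.1 + cC ⬝ᵥ p.2 : ℝ) : EReal) ≤
        zbark cI cC AI AC b CI CC Sk U (CI.mulVec xs.1 + CC.mulVec xs.2) - ((cI ⬝ᵥ xs.1 + cC ⬝ᵥ xs.2 : ℝ) : EReal)) :
    zRVF cI cC AI AC b CI CC (CI.mulVec xs.1 + CC.mulVec xs.2) = ((cI ⬝ᵥ xs.1 + cC ⬝ᵥ xs.2 : ℝ) : EReal) :=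
  stmt_17_general cI cC AI AC b CI CC hbot Sk hSkfin U xs hxs hmax
end
end
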